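/- arXiv:2503.10319 — 6 statements merged into one kernel-verified Lean document; each statement's English description precedes it below -/
import Mathlib

section
/- Let μ be a non-Dirac Borel probability measure on [0,∞) with m₂(μ) < +∞, let n ∈ ℕ, and let ν be a Borel probability measure on [0,∞) realizing μ^{⊠ n}. Then m₂(ν) < +∞ and Var(ν) = n · Var(μ) · m₁(μ)^{2(n−1)}. -/
open MeasureTheory Filter Topology Real

set_option linter.unusedSectionVars false
set_option maxHeartbeats 1000000

/-- The moment transform `ψ_μ(z) = ∫ z t / (1 - z t) dμ(t)` of a measure on `ℝ`. -/
noncomputable def psi (μ : Measure ℝ) (z : ℝ) : ℝ := ∫ t, z * t / (1 - z * t) ∂μ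

/-- `ν` realizes the `n`-fold free multiplicative convolution `μ^{⊠ n}`: with
`δ = μ({0})`, there is an inverse `χ : (δ-1,0) → (-∞,0)` of `ψ_μ` such that
`ψ_ν(((z+1)/z)^{n-1} · χ(z)^n) = z` on `(δ-1,0)` (this encodes `S_{μ^{⊠n}} = S_μ^n`). -/
def RealizesFreePower (μ ν : Measure ℝ) (n : ℕ) : Prop :=
  ∃ χ : ℝ → ℝ,
    (∀ z ∈ Set.Ioo ((μ {0}).toReal - 1) 0, χ z < 0 ∧ psi μ (χ z) = z) ∧
    (∀ z ∈ Set.Ioo ((μ {0}).toReal - 1) 0,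
      psi ν (((z + 1) / z) ^ (n - 1) * (χ z) ^ n) = z)

namespace VFP
variable {ρ : Measure ℝ} [IsProbabilityMeasure ρ]

lemma one_sub_pos_of {x t : ℝ} (hx : x < 0) (ht : 0 ≤ t) : 0 < 1 - x * t := by
  nlinarith

lemma frac_nonneg {x t : ℝ} (hx : x < 0) (ht : 0 ≤ t) : 0 ≤ t / (1 - x * t) :=
  div_nonneg ht (one_sub_pos_of hx ht).le

lemma frac_le_self {x t : ℝ} (hx : x < 0) (ht : 0 ≤ t) : t / (1 - x * t) ≤ t := by
  rw [div_le_iff₀ (one_sub_pos_of hx ht)]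
  nlinarith [mul_nonneg (mul_nonneg (neg_nonneg.2 hx.le) ht) ht]

lemma frac_le_inv {x t : ℝ} (hx : x < 0) (ht : 0 ≤ t) : t / (1 - x * t) ≤ -x⁻¹ := by
  rw [div_le_iff₀ (one_sub_pos_of hx ht)]
  have h1 : 0 < -x := by linarith
  have hxne : x ≠ 0 := hx.ne
  have e : (-x⁻¹) * (1 - x * t) = -x⁻¹ + t := by field_simp; ring
  rw [e]
  have h2 : 0 < -x⁻¹ := by rw [neg_inv]; exact inv_pos.2 h1
  linarith

lemma sq_frac_nonneg {x t : ℝ} (hx : x < 0) (ht : 0 ≤ t) : 0 ≤ t ^ 2 / (1 - x * t) :=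
  div_nonneg (by positivity) (one_sub_pos_of hx ht).le

lemma sq_frac_le {x t : ℝ} (hx : x < 0) (ht : 0 ≤ t) : t ^ 2 / (1 - x * t) ≤ t ^ 2 := by
  rw [div_le_iff₀ (one_sub_pos_of hx ht)]
  nlinarith [mul_nonneg (mul_nonneg (mul_nonneg (neg_nonneg.2 hx.le) ht) ht) ht]

lemma sq_frac_le' {x t : ℝ} (hx : x < 0) (ht : 0 ≤ t) : t ^ 2 / (1 - x * t) ≤ -x⁻¹ * t := by
  have h := frac_le_inv hx ht
  have h2 : t ^ 2 / (1 - x * t) = t * (t / (1 - x * t)) := by ring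
  rw [h2]
  calc t * (t / (1 - x * t)) ≤ t * (-x⁻¹) := by
        exact mul_le_mul_of_nonneg_left h ht
    _ = -x⁻¹ * t := by ring

lemma key_identity {x t : ℝ} (hx : x < 0) (ht : 0 ≤ t) :
    x * t / (1 - x * t) = x * t + x ^ 2 * (t ^ 2 / (1 - x * t)) := by
  have h := (one_sub_pos_of hx ht).ne'
  field_simp
  ring

lemma meas_frac (x : ℝ) : Measurable fun t : ℝ => t / (1 - x * t) :=
  measurable_id.div ((measurable_const.sub (measurable_const.mul measurable_id)))

lemma meas_sq_frac (x : ℝ) : Measurable fun t : ℝ => t ^ 2 / (1 - x * t) :=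
  (measurable_id.pow_const 2).div ((measurable_const.sub (measurable_const.mul measurable_id)))


lemma ae_nonneg (h : ρ (Set.Iio 0) = 0) : ∀ᵐ t ∂ρ, 0 ≤ t := by
  rw [ae_iff]
  convert h using 2
  ext t
  simp [not_le]

lemma int_h (h : ρ (Set.Iio 0) = 0) {x : ℝ} (hx : x < 0) :
    Integrable (fun t : ℝ => t / (1 - x * t)) ρ := by
  refine Integrable.mono' (g := fun _ => -x⁻¹) (integrable_const _)
    (meas_frac x).aestronglyMeasurable ?_
  filter_upwards [ae_nonneg h] with t ht
  rw [Real.norm_of_nonneg (frac_nonneg hx ht)]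
  exact frac_le_inv hx ht

lemma int_sq_frac_of_sq (h : ρ (Set.Iio 0) = 0) (hm2 : Integrable (fun t : ℝ => t ^ 2) ρ)
    {x : ℝ} (hx : x < 0) : Integrable (fun t : ℝ => t ^ 2 / (1 - x * t)) ρ := by
  refine Integrable.mono' hm2 (meas_sq_frac x).aestronglyMeasurable ?_
  filter_upwards [ae_nonneg h] with t ht
  rw [Real.norm_of_nonneg (sq_frac_nonneg hx ht)]
  exact sq_frac_le hx ht

lemma int_sq_frac_of_fst (h : ρ (Set.Iio 0) = 0) (hm1 : Integrable (fun t : ℝ => t) ρ)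
    {x : ℝ} (hx : x < 0) : Integrable (fun t : ℝ => t ^ 2 / (1 - x * t)) ρ := by
  refine Integrable.mono' (g := fun t => -x⁻¹ * t) (hm1.const_mul _)
    (meas_sq_frac x).aestronglyMeasurable ?_
  filter_upwards [ae_nonneg h] with t ht
  rw [Real.norm_of_nonneg (sq_frac_nonneg hx ht)]
  exact sq_frac_le' hx ht

lemma psi_eq (ρ : Measure ℝ) (x : ℝ) : psi ρ x = x * ∫ t, t / (1 - x * t) ∂ρ := by
  rw [psi, ← integral_const_mul]
  congr 1 with t
  rw [mul_div_assoc]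

lemma psi_eq2 (h : ρ (Set.Iio 0) = 0) (hm1 : Integrable (fun t : ℝ => t) ρ)
    {x : ℝ} (hx : x < 0) (hint : Integrable (fun t : ℝ => t ^ 2 / (1 - x * t)) ρ) :
    psi ρ x = x * (∫ t, t ∂ρ) + x ^ 2 * ∫ t, t ^ 2 / (1 - x * t) ∂ρ := by
  rw [psi]
  rw [integral_congr_ae (g := fun t => x * t + x ^ 2 * (t ^ 2 / (1 - x * t)))
    (by filter_upwards [ae_nonneg h] with t ht; exact key_identity hx ht)]
  rw [integral_add (hm1.const_mul x) (hint.const_mul _), integral_const_mul, integral_const_mul]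

lemma psi_mono (h : ρ (Set.Iio 0) = 0) {x y : ℝ} (hx : x ≤ y) (hy : y < 0) :
    psi ρ x ≤ psi ρ y := by
  have hx0 : x < 0 := lt_of_le_of_lt hx hy
  rw [psi_eq, psi_eq]
  have hint : ∀ {w : ℝ}, w < 0 → Integrable (fun t : ℝ => w * (t / (1 - w * t))) ρ :=
    fun hw => (int_h h hw).const_mul _
  have e : ∀ w : ℝ, w * ∫ t, t / (1 - w * t) ∂ρ = ∫ t, w * (t / (1 - w * t)) ∂ρ := by
    intro w; rw [integral_const_mul]
  rw [e, e]
  refine integral_mono_ae (hint hx0) (hint hy) ?_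
  filter_upwards [ae_nonneg h] with t ht
  have h1 : 0 < 1 - x * t := one_sub_pos_of hx0 ht
  have h2 : 0 < 1 - y * t := one_sub_pos_of hy ht
  have h12 : 1 - y * t ≤ 1 - x * t := by nlinarith
  have key : ∀ w : ℝ, 0 < 1 - w * t → w * (t / (1 - w * t)) = 1 / (1 - w * t) - 1 := by
    intro w hw; field_simp; ring
  rw [key x h1, key y h2]
  have := one_div_le_one_div_of_le h2 h12
  linarith

lemma psi_neg (h : ρ (Set.Iio 0) = 0) (hρc : ρ {(0:ℝ)}ᶜ ≠ 0) {x : ℝ} (hx : x < 0) :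
    psi ρ x < 0 := by
  have hint : Integrable (fun t : ℝ => -x * (t / (1 - x * t))) ρ := (int_h h hx).const_mul _
  have hnn : 0 ≤ᵐ[ρ] fun t : ℝ => -x * (t / (1 - x * t)) := by
    filter_upwards [ae_nonneg h] with t ht
    exact mul_nonneg (by linarith) (frac_nonneg hx ht)
  have hepos : 0 < ∫ t, -x * (t / (1 - x * t)) ∂ρ := by
    rcases lt_or_eq_of_le (integral_nonneg_of_ae hnn) with hpos | heq
    · exact hpos
    · exfalso
      have hz := (integral_eq_zero_iff_of_nonneg_ae hnn hint).1 heq.symm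
      have hz0 : ∀ᵐ t ∂ρ, t = 0 := by
        filter_upwards [hz, ae_nonneg h] with t h1 h2
        have h3 : 0 < 1 - x * t := one_sub_pos_of hx h2
        simp only [Pi.zero_apply] at h1
        have hx' : -x ≠ 0 := by linarith
        have h4 : t / (1 - x * t) = 0 := by
          rcases mul_eq_zero.1 h1 with h | h
          · exact absurd h hx'
          · exact h
        have := div_eq_zero_iff.1 h4
        rcases this with h | h
        · exact h
        · exact absurd h h3.ne'
      rw [ae_iff] at hz0
      apply hρc
      have e0 : ({(0:ℝ)}ᶜ : Set ℝ) = {a : ℝ | ¬ a = 0} := by ext t; simp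
      rw [e0]; exact hz0
  have e1 : -∫ t, -x * (t / (1 - x * t)) ∂ρ = ∫ t, x * (t / (1 - x * t)) ∂ρ := by
    rw [← integral_neg]
    exact integral_congr_ae (Eventually.of_forall fun t => by ring)
  have e2 : psi ρ x = ∫ t, x * (t / (1 - x * t)) ∂ρ := by
    rw [psi_eq, integral_const_mul]
  rw [e2, ← e1]; linarith

/-- pointwise convergence of the kernel along any filter tending to 0 -/
lemma tendsto_kernel {ι : Type*} {l : Filter ι} {w : ι → ℝ} (hw : Tendsto w l (𝓝 0))
    (f : ℝ → ℝ) (t : ℝ) :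
    Tendsto (fun i => f t / (1 - w i * t)) l (𝓝 (f t)) := by
  have h1 : Tendsto (fun i => 1 - w i * t) l (𝓝 1) := by
    have := (hw.mul_const t).const_sub 1
    simpa using this
  have := (tendsto_const_nhds (x := f t)).div h1 one_ne_zero
  rw [div_one] at this
  exact this

lemma tendsto_G (h : ρ (Set.Iio 0) = 0) (hm2 : Integrable (fun t : ℝ => t ^ 2) ρ)
    {ι : Type*} {l : Filter ι} [l.IsCountablyGenerated] {w : ι → ℝ}
    (hw : Tendsto w l (𝓝 0)) (hwneg : ∀ᶠ i in l, w i < 0) :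
    Tendsto (fun i => ∫ t, t ^ 2 / (1 - w i * t) ∂ρ) l (𝓝 (∫ t, t ^ 2 ∂ρ)) := by
  refine tendsto_integral_filter_of_dominated_convergence (fun t => t ^ 2)
    (Eventually.of_forall fun i => (meas_sq_frac (w i)).aestronglyMeasurable) ?_ hm2 ?_
  · filter_upwards [hwneg] with i hi
    filter_upwards [ae_nonneg h] with t ht
    rw [Real.norm_of_nonneg (sq_frac_nonneg hi ht)]
    exact sq_frac_le hi ht
  · exact Eventually.of_forall fun t => tendsto_kernel hw (fun s => s ^ 2) t

lemma tendsto_h (h : ρ (Set.Iio 0) = 0) (hm1 : Integrable (fun t : ℝ => t) ρ)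
    {ι : Type*} {l : Filter ι} [l.IsCountablyGenerated] {w : ι → ℝ}
    (hw : Tendsto w l (𝓝 0)) (hwneg : ∀ᶠ i in l, w i < 0) :
    Tendsto (fun i => ∫ t, t / (1 - w i * t) ∂ρ) l (𝓝 (∫ t, t ∂ρ)) := by
  refine tendsto_integral_filter_of_dominated_convergence (fun t => t)
    (Eventually.of_forall fun i => (meas_frac (w i)).aestronglyMeasurable) ?_ hm1 ?_
  · filter_upwards [hwneg] with i hi
    filter_upwards [ae_nonneg h] with t ht
    rw [Real.norm_of_nonneg (frac_nonneg hi ht)]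
    exact frac_le_self hi ht
  · exact Eventually.of_forall fun t => tendsto_kernel hw (fun s => s) t

/-- Fatou + DCT: recover a moment of `ρ` from limits of regularized integrals. -/
lemma key (h : ρ (Set.Iio 0) = 0) (f : ℝ → ℝ) (hfm : Measurable f)
    (hf0 : ∀ t : ℝ, 0 ≤ t → 0 ≤ f t)
    (w : ℕ → ℝ) (hwneg : ∀ k, w k < 0) (hw0 : Tendsto w atTop (𝓝 0))
    (hint : ∀ k, Integrable (fun t => f t / (1 - w k * t)) ρ)
    {M : ℝ} (hlim : Tendsto (fun k => ∫ t, f t / (1 - w k * t) ∂ρ) atTop (𝓝 M)) :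
    Integrable f ρ ∧ ∫ t, f t ∂ρ = M := by
  have hfk_nonneg : ∀ k, 0 ≤ᵐ[ρ] fun t => f t / (1 - w k * t) := by
    intro k
    filter_upwards [ae_nonneg h] with t ht
    exact div_nonneg (hf0 t ht) (one_sub_pos_of (hwneg k) ht).le
  have hfk_le : ∀ k, ∀ᵐ t ∂ρ, f t / (1 - w k * t) ≤ f t := by
    intro k
    filter_upwards [ae_nonneg h] with t ht
    refine div_le_self (hf0 t ht) ?_
    nlinarith [mul_nonneg (neg_nonneg.2 (hwneg k).le) ht]
  -- lintegral versions
  have hmeask : ∀ k, Measurable fun t => ENNReal.ofReal (f t / (1 - w k * t)) :=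
    fun k => (hfm.div (measurable_const.sub (measurable_const.mul measurable_id))).ennreal_ofReal
  have heq : ∀ k, ∫⁻ t, ENNReal.ofReal (f t / (1 - w k * t)) ∂ρ
      = ENNReal.ofReal (∫ t, f t / (1 - w k * t) ∂ρ) :=
    fun k => (ofReal_integral_eq_lintegral_ofReal (hint k) (hfk_nonneg k)).symm
  have hptw : ∀ᵐ t ∂ρ, Tendsto (fun k => ENNReal.ofReal (f t / (1 - w k * t))) atTop
      (𝓝 (ENNReal.ofReal (f t))) := by
    filter_upwards with t
    exact (ENNReal.tendsto_ofReal (tendsto_kernel hw0 f t))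
  have hliminf : ∫⁻ t, ENNReal.ofReal (f t) ∂ρ ≤ ENNReal.ofReal M := by
    have h1 : ∫⁻ t, ENNReal.ofReal (f t) ∂ρ
        = ∫⁻ t, liminf (fun k => ENNReal.ofReal (f t / (1 - w k * t))) atTop ∂ρ := by
      refine lintegral_congr_ae ?_
      filter_upwards [hptw] with t ht
      exact ht.liminf_eq.symm
    rw [h1]
    refine le_trans (lintegral_liminf_le hmeask) ?_
    have h2 : liminf (fun k => ∫⁻ t, ENNReal.ofReal (f t / (1 - w k * t)) ∂ρ) atTop
        = ENNReal.ofReal M := by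
      have : Tendsto (fun k => ∫⁻ t, ENNReal.ofReal (f t / (1 - w k * t)) ∂ρ) atTop
          (𝓝 (ENNReal.ofReal M)) := by
        simp only [heq]
        exact ENNReal.tendsto_ofReal hlim
      exact this.liminf_eq
    exact le_of_eq h2
  have hintf : Integrable f ρ := by
    refine ⟨hfm.aestronglyMeasurable, ?_⟩
    rw [hasFiniteIntegral_iff_norm]
    have : ∫⁻ t, ENNReal.ofReal ‖f t‖ ∂ρ = ∫⁻ t, ENNReal.ofReal (f t) ∂ρ := by
      refine lintegral_congr_ae ?_
      filter_upwards [ae_nonneg h] with t ht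
      rw [Real.norm_of_nonneg (hf0 t ht)]
    rw [this]
    exact lt_of_le_of_lt hliminf ENNReal.ofReal_lt_top
  refine ⟨hintf, ?_⟩
  have hDCT : Tendsto (fun k => ∫ t, f t / (1 - w k * t) ∂ρ) atTop (𝓝 (∫ t, f t ∂ρ)) := by
    refine tendsto_integral_filter_of_dominated_convergence f
      (Eventually.of_forall fun k => (hint k).1) ?_ hintf ?_
    · refine Eventually.of_forall fun k => ?_
      filter_upwards [hfk_nonneg k, hfk_le k] with t h1 h2
      rw [Real.norm_of_nonneg h1]; exact h2
    · exact Eventually.of_forall fun t => tendsto_kernel hw0 f t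
  exact tendsto_nhds_unique hDCT hlim
lemma eq_dirac_zero (h0 : ρ {(0:ℝ)}ᶜ = 0) : ρ = Measure.dirac 0 := by
  ext s hs
  rw [Measure.dirac_apply' _ hs]
  have h1 : ρ s = ρ (s ∩ {0}) := by
    have := measure_inter_add_diff (μ := ρ) s (MeasurableSet.singleton (0:ℝ))
    have h2 : ρ (s \ {0}) = 0 :=
      measure_mono_null (Set.diff_subset_compl s {0}) h0
    rw [h2, add_zero] at this
    exact this.symm
  have h3 : ρ {(0:ℝ)} = 1 := by
    have := measure_add_measure_compl (μ := ρ) (MeasurableSet.singleton (0:ℝ))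
    rw [h0, add_zero] at this
    rw [this]; exact measure_univ
  by_cases h : (0:ℝ) ∈ s
  · rw [h1, Set.inter_eq_right.2 (Set.singleton_subset_iff.2 h), h3,
      Set.indicator_of_mem h]; rfl
  · have h4 : s ∩ {(0:ℝ)} = ∅ := by
      ext t; simp only [Set.mem_inter_iff, Set.mem_singleton_iff, Set.mem_empty_iff_false,
        iff_false, not_and]
      rintro ht rfl; exact h ht
    rw [h1, h4, measure_empty, Set.indicator_of_notMem h]

end VFP

open VFP in
/-- Variance of the free multiplicative convolution power: if `μ` is a non-Dirac
probability measure on `[0,∞)` with `m₂(μ) < ∞` and `ν` realizes `μ^{⊠ n}`, then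
`m₂(ν) < ∞` and `Var(ν) = n · Var(μ) · m₁(μ)^{2(n-1)}`. -/
theorem variance_free_power
    (μ ν : Measure ℝ) [IsProbabilityMeasure μ] [IsProbabilityMeasure ν]
    (hsupp : μ (Set.Iio 0) = 0) (hνsupp : ν (Set.Iio 0) = 0)
    (hnd : ∀ a : ℝ, μ ≠ Measure.dirac a)
    (hm2 : Integrable (fun t : ℝ => t ^ 2) μ)
    (n : ℕ) (hn : 0 < n) (hν : RealizesFreePower μ ν n) :
    Integrable (fun t : ℝ => t ^ 2) ν ∧
      (∫ t, t ^ 2 ∂ν) - (∫ t, t ∂ν) ^ 2 =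
        (n : ℝ) * ((∫ t, t ^ 2 ∂μ) - (∫ t, t ∂μ) ^ 2) * (∫ t, t ∂μ) ^ (2 * (n - 1)) := by
  obtain ⟨m, rfl⟩ : ∃ m, n = m + 1 := ⟨n - 1, (Nat.succ_pred_eq_of_pos hn).symm⟩
  obtain ⟨χ, hχ, hψν⟩ := hν
  simp only [Nat.add_sub_cancel] at hψν
  set δ : ℝ := (μ {0}).toReal with hδdef
  set m1 : ℝ := ∫ t, t ∂μ with hm1def
  set m2 : ℝ := ∫ t, t ^ 2 ∂μ with hm2def
  set S : Set ℝ := Set.Ioo (δ - 1) 0 with hSdef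
  -- basic facts
  have hμc : μ {(0:ℝ)}ᶜ ≠ 0 := by
    intro h0
    exact hnd 0 (eq_dirac_zero h0)
  have haeμ : ∀ᵐ t ∂μ, 0 ≤ t := ae_nonneg hsupp
  have haeν : ∀ᵐ t ∂ν, 0 ≤ t := ae_nonneg hνsupp
  have hm1int : Integrable (fun t : ℝ => t) μ := by
    refine Integrable.mono' (g := fun t => t ^ 2 + 1) (hm2.add (integrable_const 1))
      measurable_id.aestronglyMeasurable ?_
    filter_upwards with t
    rw [Real.norm_eq_abs]
    nlinarith [abs_nonneg t, sq_abs t]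
  have hm1pos : 0 < m1 := by
    rcases lt_or_eq_of_le (integral_nonneg_of_ae haeμ) with h | h
    · exact h
    · exfalso
      have hz := (integral_eq_zero_iff_of_nonneg_ae haeμ hm1int).1 h.symm
      apply hμc
      have : ∀ᵐ t ∂μ, t = 0 := hz
      rw [ae_iff] at this
      have e0 : ({(0:ℝ)}ᶜ : Set ℝ) = {a : ℝ | ¬ a = 0} := by ext t; simp
      rw [e0]; exact this
  have hδ1 : δ - 1 < 0 := by
    have h1 : μ {(0:ℝ)} < 1 := by
      rcases lt_or_eq_of_le (prob_le_one (μ := μ) (s := {0})) with h | h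
      · exact h
      · exfalso
        apply hμc
        have h2 := measure_add_measure_compl (μ := μ) (MeasurableSet.singleton (0:ℝ))
        rw [h, measure_univ] at h2
        exact (ENNReal.add_right_inj ENNReal.one_ne_top).1 (by rw [add_zero]; exact h2)
    have : δ < 1 := by
      rw [hδdef]
      exact ENNReal.toReal_lt_of_lt_ofReal (by simpa using h1)
    linarith
  have hδ0 : 0 ≤ δ := ENNReal.toReal_nonneg
  -- the approach filter
  set F : Filter ℝ := 𝓝[S] 0 with hFdef
  have hFz : ∀ᶠ z in F, z ∈ S := eventually_mem_nhdsWithin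
  have hF0 : Tendsto (fun z : ℝ => z) F (𝓝 0) := tendsto_id.mono_right nhdsWithin_le_nhds
  -- χ tends to 0 from below
  have hχ0 : Tendsto χ F (𝓝[<] (0:ℝ)) := by
    rw [tendsto_nhdsWithin_iff]
    constructor
    · rw [Metric.tendsto_nhds]
      intro ε hε
      have hψε : psi μ (-ε) < 0 := psi_neg hsupp hμc (by linarith)
      have hev : ∀ᶠ z in F, psi μ (-ε) < z := hF0.eventually (eventually_gt_nhds hψε)
      filter_upwards [hFz, hev] with z hz hz2
      have hχneg := (hχ z hz).1
      have hlow : -ε < χ z := by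
        by_contra hc
        push_neg at hc
        have h3 := psi_mono hsupp hc (by linarith : (-ε:ℝ) < 0)
        rw [(hχ z hz).2] at h3
        linarith
      rw [Real.dist_eq, sub_zero, abs_lt]
      exact ⟨by linarith, by linarith⟩
    · filter_upwards [hFz] with z hz
      exact (hχ z hz).1
  have hχnhds : Tendsto χ F (𝓝 0) := hχ0.mono_right nhdsWithin_le_nhds
  -- the second-order coefficient for μ
  have hgμ : Tendsto (fun z => ∫ t, t ^ 2 / (1 - χ z * t) ∂μ) F (𝓝 m2) :=
    tendsto_G hsupp hm2 hχnhds (hχ0.eventually (eventually_mem_nhdsWithin))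
  -- key identity for χ
  have hkey : ∀ z ∈ S, z = m1 * χ z + (χ z) ^ 2 * ∫ t, t ^ 2 / (1 - χ z * t) ∂μ := by
    intro z hz
    have h1 := (hχ z hz).2
    rw [psi_eq2 hsupp hm1int (hχ z hz).1 (int_sq_frac_of_sq hsupp hm2 (hχ z hz).1)] at h1
    rw [hm1def]; linear_combination -h1
  -- χ z / z → 1/m1
  have hzχ : Tendsto (fun z => z / χ z) F (𝓝 m1) := by
    have h1 : Tendsto (fun z => m1 + χ z * ∫ t, t ^ 2 / (1 - χ z * t) ∂μ) F
        (𝓝 (m1 + 0 * m2)) := tendsto_const_nhds.add (hχnhds.mul hgμ)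
    rw [zero_mul, add_zero] at h1
    refine h1.congr' ?_
    filter_upwards [hFz] with z hz
    have hχne : χ z ≠ 0 := (hχ z hz).1.ne
    rw [eq_div_iff hχne]
    linear_combination -(hkey z hz)
  have hu : Tendsto (fun z => χ z / z) F (𝓝 m1⁻¹) := by
    have h2 := hzχ.inv₀ hm1pos.ne'
    exact h2.congr fun z => inv_div z (χ z)
  -- definition of w
  set w : ℝ → ℝ := fun z => ((z + 1) / z) ^ m * (χ z) ^ (m + 1) with hwdef
  have hw_eq : ∀ z ∈ S, w z = z * (1 + z) ^ m * (χ z / z) ^ (m + 1) := by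
    intro z hz
    have hz0 : z ≠ 0 := hz.2.ne
    rw [hwdef]
    show ((z + 1) / z) ^ m * χ z ^ (m + 1) = _
    rw [div_pow, div_pow, add_comm z 1]
    field_simp
    ring
  have haux : ∀ z ∈ S, -1 < z := fun z hz => by
    have := hz.1; simp only [hSdef, Set.mem_Ioo] at hz; linarith [hδ0, hz.1]
  have hwneg : ∀ z ∈ S, w z < 0 := by
    intro z hz
    have hz0 : z < 0 := hz.2
    have h1z : (0:ℝ) < 1 + z := by linarith [haux z hz]
    have hχz : 0 < χ z / z := div_pos_of_neg_of_neg (hχ z hz).1 hz0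
    rw [hw_eq z hz]
    have : 0 < (1 + z) ^ m * (χ z / z) ^ (m + 1) := by positivity
    calc z * (1 + z) ^ m * (χ z / z) ^ (m + 1)
        = z * ((1 + z) ^ m * (χ z / z) ^ (m + 1)) := by ring
      _ < 0 := mul_neg_of_neg_of_pos hz0 this
  have h1z : Tendsto (fun z : ℝ => 1 + z) F (𝓝 1) := by
    have := tendsto_const_nhds (α := ℝ) (x := (1:ℝ)) (f := F) |>.add hF0
    simpa using this
  have hw0 : Tendsto w F (𝓝[<] (0:ℝ)) := by
    rw [tendsto_nhdsWithin_iff]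
    constructor
    · have h2 : Tendsto (fun z => z * (1 + z) ^ m * (χ z / z) ^ (m + 1)) F
          (𝓝 (0 * 1 ^ m * (m1⁻¹) ^ (m + 1))) := (hF0.mul (h1z.pow m)).mul (hu.pow (m + 1))
      rw [zero_mul, zero_mul] at h2
      refine h2.congr' ?_
      filter_upwards [hFz] with z hz
      exact (hw_eq z hz).symm
    · filter_upwards [hFz] with z hz
      exact hwneg z hz
  have hwnhds : Tendsto w F (𝓝 0) := hw0.mono_right nhdsWithin_le_nhds
  -- first moment of ν
  have hνkey : ∀ z ∈ S, w z * ∫ t, t / (1 - w z * t) ∂ν = z := by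
    intro z hz
    have h1 := hψν z hz
    rw [show ((z + 1) / z) ^ m * χ z ^ (m + 1) = w z from rfl, psi_eq] at h1
    exact h1
  have hhν : Tendsto (fun z => ∫ t, t / (1 - w z * t) ∂ν) F (𝓝 (m1 ^ (m + 1))) := by
    have hden : Tendsto (fun z => (1 + z) ^ m * (χ z / z) ^ (m + 1)) F
        (𝓝 (1 ^ m * (m1⁻¹) ^ (m + 1))) := (h1z.pow m).mul (hu.pow (m + 1))
    have hdne : (1:ℝ) ^ m * (m1⁻¹) ^ (m + 1) ≠ 0 := by
      have : m1⁻¹ ≠ 0 := inv_ne_zero hm1pos.ne'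
      positivity
    have hlim := hden.inv₀ hdne
    have hval : ((1:ℝ) ^ m * (m1⁻¹) ^ (m + 1))⁻¹ = m1 ^ (m + 1) := by
      rw [one_pow, one_mul, ← inv_pow, inv_inv]
    rw [hval] at hlim
    refine hlim.congr' ?_
    filter_upwards [hFz] with z hz
    have hz0 : z ≠ 0 := hz.2.ne
    have hwne : w z ≠ 0 := (hwneg z hz).ne
    have h2 : ∫ t, t / (1 - w z * t) ∂ν = z / w z := by
      rw [eq_div_iff hwne]
      linear_combination hνkey z hz
    rw [h2, hw_eq z hz, show z * (1 + z) ^ m * (χ z / z) ^ (m + 1)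
      = z * ((1 + z) ^ m * (χ z / z) ^ (m + 1)) from by ring, div_mul_cancel_left₀ hz0]
  -- explicit approach sequence
  set zs : ℕ → ℝ := fun k => (δ - 1) / (k + 2) with hzsdef
  have hzsS : ∀ k, zs k ∈ S := by
    intro k
    have hc : (0:ℝ) < (k:ℝ) + 2 := by positivity
    constructor
    · rw [lt_div_iff₀ hc]
      nlinarith [Nat.cast_nonneg (α := ℝ) k]
    · exact div_neg_of_neg_of_pos hδ1 hc
  have hzsF : Tendsto zs atTop F := by
    rw [tendsto_nhdsWithin_iff]
    refine ⟨?_, Eventually.of_forall hzsS⟩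
    have h2 : Tendsto (fun k : ℕ => (k:ℝ) + 2) atTop atTop :=
      tendsto_atTop_add_const_right _ 2 tendsto_natCast_atTop_atTop
    exact Tendsto.div_atTop tendsto_const_nhds h2
  have hm1ν : Integrable (fun t : ℝ => t) ν ∧ (∫ t, t ∂ν) = m1 ^ (m + 1) := by
    refine key hνsupp (fun t => t) measurable_id (fun t ht => ht) (fun k => w (zs k))
      (fun k => hwneg _ (hzsS k)) (hwnhds.comp hzsF) (fun k => int_h hνsupp (hwneg _ (hzsS k))) ?_
    exact hhν.comp hzsF
  -- second moment of ν : the limit value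
  set c : ℝ := m1⁻¹ ^ 2 * m2 with hcdef
  set M : ℝ := (-(m : ℝ) + 1 ^ m * (c * ((m:ℝ) + 1))) / (1 ^ (2 * m) * (m1⁻¹) ^ (2 * m + 2)) with hMdef
  have hGν : Tendsto (fun z => ∫ t, t ^ 2 / (1 - w z * t) ∂ν) F (𝓝 M) := by
    set g : ℝ → ℝ := fun z => ∫ t, t ^ 2 / (1 - χ z * t) ∂μ with hgdef
    set e : ℝ → ℝ := fun z => (χ z / z) ^ 2 * g z with hedef
    have he : Tendsto e F (𝓝 c) := (hu.pow 2).mul hgμ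
    set N : ℝ → ℝ := fun z => -(∑ i ∈ Finset.range m, (1 + z) ^ i)
        + (1 + z) ^ m * (e z * ∑ i ∈ Finset.range (m + 1), (1 - z * e z) ^ i) with hNdef
    set D : ℝ → ℝ := fun z => (1 + z) ^ (2 * m) * (χ z / z) ^ (2 * m + 2) with hDdef
    have hNlim : Tendsto N F (𝓝 (-(m:ℝ) + 1 ^ m * (c * ((m:ℝ) + 1)))) := by
      have hsum1 : Tendsto (fun z => ∑ i ∈ Finset.range m, (1 + z) ^ i) F (𝓝 (m:ℝ)) := by
        have h3 := tendsto_finset_sum (Finset.range m) (fun i _ => h1z.pow i)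
        simpa using h3
      have h2 : Tendsto (fun z => 1 - z * e z) F (𝓝 1) := by
        have h4 := (tendsto_const_nhds (α := ℝ) (x := (1:ℝ)) (f := F)).sub (hF0.mul he)
        simpa using h4
      have hsum2 : Tendsto (fun z => ∑ i ∈ Finset.range (m + 1), (1 - z * e z) ^ i) F
          (𝓝 ((m:ℝ) + 1)) := by
        have h5 := tendsto_finset_sum (Finset.range (m + 1)) (fun i _ => h2.pow i)
        simpa [Nat.cast_add] using h5
      exact (hsum1.neg).add ((h1z.pow m).mul (he.mul hsum2))
    have hDlim : Tendsto D F (𝓝 (1 ^ (2 * m) * m1⁻¹ ^ (2 * m + 2))) :=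
      (h1z.pow (2 * m)).mul (hu.pow (2 * m + 2))
    have hDne : (1:ℝ) ^ (2 * m) * m1⁻¹ ^ (2 * m + 2) ≠ 0 := by
      have : m1⁻¹ ≠ 0 := inv_ne_zero hm1pos.ne'
      positivity
    have hfin := hNlim.div hDlim hDne
    refine hfin.congr' ?_
    filter_upwards [hFz] with z hz
    have hz0 : z ≠ 0 := hz.2.ne
    have hχne : χ z ≠ 0 := (hχ z hz).1.ne
    have h1zpos : (0:ℝ) < 1 + z := by linarith [haux z hz]
    have hχzpos : 0 < χ z / z := div_pos_of_neg_of_neg (hχ z hz).1 hz.2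
    have hDz : D z ≠ 0 := by
      have : 0 < D z := by rw [hDdef]; positivity
      exact this.ne'
    -- step a : m1 * (χ z / z) = 1 - z * e z
    have stepa : m1 * (χ z / z) = 1 - z * e z := by
      have hk : z = m1 * χ z + χ z ^ 2 * g z := hkey z hz
      have hinv : z * z⁻¹ = 1 := mul_inv_cancel₀ hz0
      show m1 * (χ z / z) = 1 - z * ((χ z / z) ^ 2 * g z)
      linear_combination (-z⁻¹) * hk + (1 + χ z ^ 2 * g z * z⁻¹) * hinv
    -- step b
    have stepb : m1 ^ (m + 1) * w z = z * (1 + z) ^ m * (1 - z * e z) ^ (m + 1) := by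
      calc m1 ^ (m + 1) * w z = z * (1 + z) ^ m * (m1 * (χ z / z)) ^ (m + 1) := by
            rw [hw_eq z hz]; rw [mul_pow]; ring
        _ = z * (1 + z) ^ m * (1 - z * e z) ^ (m + 1) := by rw [stepa]
    -- step c
    have stepc : 1 - (1 + z) ^ m * (1 - z * e z) ^ (m + 1) = z * N z := by
      have g1 := geom_sum_mul (1 + z) m
      have g2 := geom_sum_mul (1 - z * e z) (m + 1)
      rw [hNdef]
      linear_combination g1 + (1 + z) ^ m * g2
    -- step d
    have stepd : w z ^ 2 = z ^ 2 * D z := by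
      rw [hw_eq z hz, hDdef]
      ring
    -- the ν-side identity
    have hν2 : z = w z * m1 ^ (m + 1) + w z ^ 2 * ∫ t, t ^ 2 / (1 - w z * t) ∂ν := by
      have h6 := hψν z hz
      rw [show ((z + 1) / z) ^ m * χ z ^ (m + 1) = w z from rfl] at h6
      rw [psi_eq2 hνsupp hm1ν.1 (hwneg z hz)
        (int_sq_frac_of_fst hνsupp hm1ν.1 (hwneg z hz)), hm1ν.2] at h6
      linear_combination -h6
    have hmain : D z * ∫ t, t ^ 2 / (1 - w z * t) ∂ν = N z := by
      have h7 : z ^ 2 * (D z * ∫ t, t ^ 2 / (1 - w z * t) ∂ν) = z ^ 2 * N z := by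
        linear_combination (-(∫ t, t ^ 2 / (1 - w z * t) ∂ν)) * stepd - hν2 - stepb + z * stepc
      exact mul_left_cancel₀ (pow_ne_zero 2 hz0) h7
    show N z / D z = ∫ t, t ^ 2 / (1 - w z * t) ∂ν
    rw [div_eq_iff hDz]
    linear_combination -hmain
  have hm2ν : Integrable (fun t : ℝ => t ^ 2) ν ∧ (∫ t, t ^ 2 ∂ν) = M := by
    refine key hνsupp (fun t => t ^ 2) (measurable_id.pow_const 2) (fun t ht => by positivity)
      (fun k => w (zs k)) (fun k => hwneg _ (hzsS k)) (hwnhds.comp hzsF)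
      (fun k => int_sq_frac_of_fst hνsupp hm1ν.1 (hwneg _ (hzsS k))) ?_
    exact hGν.comp hzsF
  refine ⟨hm2ν.1, ?_⟩
  rw [hm2ν.2, hm1ν.2, hMdef, hcdef]
  have hm1ne : m1 ≠ 0 := hm1pos.ne'
  have hsimp : (m + 1 - 1) = m := by omega
  rw [hsimp]
  push_cast
  simp only [one_pow, one_mul, inv_pow]
  field_simp
  ring
end

section
/- For every positive integer p, the following identity holds: ∑_{r=1}^{p−1} (r^{r−1}/r!) · ((p−r)^{p−r}/(p−r)!) = (p−1) · p^{p−1}/p! (as an identity of rational numbers; for p = 1 both sides equal 0). -/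
open Finset Polynomial in

lemma alt_sum (n : ℕ) : ∀ j : ℕ, j < n →
    ∑ k ∈ Finset.range (n+1), (-1:ℚ)^k * (n.choose k) * (k:ℚ)^j = 0 := by
  induction n using Nat.strong_induction_on with
  | _ n IH =>
    intro j hj
    match j with
    | 0 =>
      have h := add_pow (-1 : ℚ) 1 n
      simp only [neg_add_cancel, one_pow, mul_one] at h
      have hn : n ≠ 0 := by omega
      rw [zero_pow hn] at h
      simpa using h.symm
    | j + 1 =>
      obtain ⟨m, rfl⟩ : ∃ m, n = m + 1 := ⟨n - 1, by omega⟩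
      rw [Finset.sum_range_succ']
      simp only [Nat.cast_zero, zero_pow (Nat.succ_ne_zero j), mul_zero, add_zero]
      have hterm : ∀ i, (-1:ℚ)^(i+1) * (((m+1).choose (i+1) : ℕ) : ℚ) * ((i+1:ℕ):ℚ)^(j+1)
          = -((m:ℚ)+1) * ((-1:ℚ)^i * (m.choose i) * ((i:ℚ)+1)^j) := by
        intro i
        have hc : (m+1).choose (i+1) * (i+1) = (m+1) * m.choose i := by
          rw [Nat.add_one_mul_choose_eq]
        have hcq : (((m+1).choose (i+1) : ℕ) : ℚ) * ((i:ℚ)+1) = ((m:ℚ)+1) * (m.choose i : ℚ) := by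
          exact_mod_cast hc
        push_cast
        rw [pow_succ ((i:ℚ)+1) j, pow_succ (-1:ℚ) i]
        linear_combination (-(-1:ℚ)^i * ((i:ℚ)+1)^j) * hcq
      rw [Finset.sum_congr rfl (fun i _ => hterm i), ← Finset.mul_sum]
      have hexp : ∀ i : ℕ, ((i:ℚ)+1)^j = ∑ t ∈ Finset.range (j+1), (i:ℚ)^t * (j.choose t) := by
        intro i
        have := add_pow (i:ℚ) 1 j
        simpa using this
      have : ∑ i ∈ Finset.range (m+1), (-1:ℚ)^i * (m.choose i) * ((i:ℚ)+1)^j = 0 := by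
        calc ∑ i ∈ Finset.range (m+1), (-1:ℚ)^i * (m.choose i) * ((i:ℚ)+1)^j
            = ∑ i ∈ Finset.range (m+1), ∑ t ∈ Finset.range (j+1),
                ((j.choose t : ℚ)) * ((-1:ℚ)^i * (m.choose i) * (i:ℚ)^t) := by
              refine Finset.sum_congr rfl fun i _ => ?_
              rw [hexp i, Finset.mul_sum]
              exact Finset.sum_congr rfl fun t _ => by ring
          _ = ∑ t ∈ Finset.range (j+1), ((j.choose t : ℚ)) *
                ∑ i ∈ Finset.range (m+1), ((-1:ℚ)^i * (m.choose i) * (i:ℚ)^t) := by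
              rw [Finset.sum_comm]
              exact Finset.sum_congr rfl fun t _ => (Finset.mul_sum _ _ _).symm
          _ = 0 := by
              refine Finset.sum_eq_zero fun t ht => ?_
              have ht' := Finset.mem_range.mp ht
              rw [IH m (Nat.lt_succ_self m) t (by omega : t < m), mul_zero]
      rw [this, mul_zero]

open Finset Polynomial in

lemma key (n : ℕ) (hn : 1 ≤ n) : ∀ a : ℚ,
    ∑ k ∈ Finset.Icc 1 n, (((n.choose k : ℕ):ℚ) * (k:ℚ)^(k-1)) •
        ((X + Polynomial.C (a + ((n - k : ℕ) : ℚ)))^(n-k) : ℚ[X])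
    = (n : ℚ) • (X + Polynomial.C (a + (n:ℚ)))^(n-1) := by
  induction n, hn using Nat.le_induction with
  | base => intro a; simp
  | succ n hn IH =>
    intro a
    set P : ℚ[X] := ∑ k ∈ Finset.Icc 1 (n+1), ((((n+1).choose k : ℕ):ℚ) * (k:ℚ)^(k-1)) •
        ((X + Polynomial.C (a + ((n+1 - k : ℕ) : ℚ)))^(n+1-k) : ℚ[X]) with hP
    set Q : ℚ[X] := ((n+1:ℕ) : ℚ) • (X + Polynomial.C (a + ((n+1:ℕ):ℚ)))^(n+1-1) with hQ
    -- derivatives agree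
    have hd : derivative P = derivative Q := by
      have hdP : derivative P = ((n:ℚ)+1) •
          (∑ k ∈ Finset.Icc 1 n, (((n.choose k : ℕ):ℚ) * (k:ℚ)^(k-1)) •
            ((X + Polynomial.C ((a+1) + ((n - k : ℕ) : ℚ)))^(n-k) : ℚ[X])) := by
        rw [hP, derivative_sum, Finset.smul_sum,
          Finset.sum_Icc_succ_top (by omega : 1 ≤ n+1)]
        have htop : derivative (((((n+1).choose (n+1) : ℕ):ℚ) * ((n+1:ℕ):ℚ)^(n+1-1)) •
            ((X + Polynomial.C (a + ((n+1 - (n+1) : ℕ) : ℚ)))^(n+1-(n+1)) : ℚ[X])) = 0 := by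
          simp
        rw [htop, add_zero]
        refine Finset.sum_congr rfl fun k hk => ?_
        obtain ⟨hk1, hk2⟩ := Finset.mem_Icc.mp hk
        rw [derivative_smul, derivative_pow, derivative_X_add_C, mul_one]
        have hcast : ((n+1 - k : ℕ) : ℚ) = ((n - k : ℕ) : ℚ) + 1 := by
          have : n + 1 - k = (n - k) + 1 := by omega
          rw [this]; push_cast; ring
        have hexp : n + 1 - k - 1 = n - k := by omega
        rw [hcast, hexp, ← smul_eq_C_mul, smul_smul, smul_smul]
        have hs : (((n+1).choose k : ℕ):ℚ) * (k:ℚ)^(k-1) * (((n - k : ℕ) : ℚ) + 1)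
            = ((n:ℚ)+1) * (((n.choose k : ℕ):ℚ) * (k:ℚ)^(k-1)) := by
          have h1 : ((n+1).choose k) * (n+1-k) = n.choose k * (n+1) :=
            (Nat.choose_mul_succ_eq n k).symm
          have h1q : (((n+1).choose k : ℕ):ℚ) * (((n+1-k : ℕ)):ℚ)
              = ((n.choose k : ℕ):ℚ) * (((n+1 : ℕ)):ℚ) := by exact_mod_cast h1
          rw [← hcast]
          push_cast at h1q ⊢
          linear_combination ((k:ℚ)^(k-1)) * h1q
        rw [hs]
        congr 1
        push_cast
        ring
      have hdQ : derivative Q = ((n:ℚ)+1) •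
          ((n : ℚ) • (X + Polynomial.C ((a+1) + (n:ℚ)))^(n-1)) := by
        rw [hQ, derivative_smul, derivative_pow, derivative_X_add_C, mul_one,
          ← smul_eq_C_mul, smul_smul]
        have h2 : a + ((n+1:ℕ):ℚ) = (a+1) + (n:ℚ) := by push_cast; ring
        rw [h2, smul_smul]
        congr 1
        push_cast
        ring
      rw [hdP, hdQ, IH (a+1)]
    -- evaluations at t agree
    set t : ℚ := -(a + ((n+1:ℕ):ℚ)) with ht
    have hev : P.eval t = Q.eval t := by
      have hevQ : Q.eval t = 0 := by
        rw [hQ]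
        simp only [eval_smul, eval_pow, eval_add, eval_X, eval_C, ht, smul_eq_mul]
        rw [show -(a + ((n+1:ℕ):ℚ)) + (a + ((n+1:ℕ):ℚ)) = 0 by ring]
        rw [zero_pow (by omega : n + 1 - 1 ≠ 0), mul_zero]
      have hevP : P.eval t = ∑ k ∈ Finset.Icc 1 (n+1),
          (-1:ℚ)^(n+1) * ((-1:ℚ)^k * (((n+1).choose k : ℕ):ℚ) * (k:ℚ)^n) := by
        rw [hP, eval_finset_sum]
        refine Finset.sum_congr rfl fun k hk => ?_
        obtain ⟨hk1, hk2⟩ := Finset.mem_Icc.mp hk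
        simp only [eval_smul, eval_pow, eval_add, eval_X, eval_C, smul_eq_mul, ht]
        have hcast : ((n+1 - k : ℕ) : ℚ) = ((n+1:ℕ):ℚ) - (k:ℚ) := by
          push_cast [Nat.cast_sub hk2]; ring
        rw [hcast, show -(a + ((n+1:ℕ):ℚ)) + (a + (((n+1:ℕ):ℚ) - (k:ℚ))) = -(k:ℚ) by ring]
        rw [neg_pow]
        have hsign : (-1:ℚ)^(n+1-k) * (-1:ℚ)^k = (-1:ℚ)^(n+1) := by
          rw [← pow_add]; congr 1; omega
        have hpow : (k:ℚ)^(k-1) * (k:ℚ)^(n+1-k) = (k:ℚ)^n := by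
          rw [← pow_add]; congr 1; omega
        calc (((n+1).choose k : ℕ):ℚ) * (k:ℚ)^(k-1) * ((-1:ℚ)^(n+1-k) * (k:ℚ)^(n+1-k))
            = ((-1:ℚ)^(n+1-k) * (-1:ℚ)^k) * ((-1:ℚ)^k * (((n+1).choose k : ℕ):ℚ) *
                ((k:ℚ)^(k-1) * (k:ℚ)^(n+1-k))) := by
              have : (-1:ℚ)^k * (-1:ℚ)^k = 1 := by
                rw [← pow_add, ← two_mul, pow_mul]; norm_num
              linear_combination (-(((n+1).choose k : ℕ):ℚ) * (k:ℚ)^(k-1) * (-1:ℚ)^(n+1-k) * (k:ℚ)^(n+1-k)) * this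
          _ = (-1:ℚ)^(n+1) * ((-1:ℚ)^k * (((n+1).choose k : ℕ):ℚ) * (k:ℚ)^n) := by
              rw [hsign, hpow]
      rw [hevP, hevQ, ← Finset.mul_sum]
      have hz : ∑ k ∈ Finset.Icc 1 (n+1), (-1:ℚ)^k * (((n+1).choose k : ℕ):ℚ) * (k:ℚ)^n = 0 := by
        have halt := alt_sum (n+1) n (by omega)
        rw [Finset.sum_range_succ'] at halt
        simp only [Nat.cast_zero, pow_zero, zero_pow (by omega : n ≠ 0), mul_zero, add_zero] at halt
        rw [show Finset.Icc 1 (n+1) = Finset.Ico 1 (n+2) from (Finset.Ico_add_one_right_eq_Icc 1 (n+1)).symm,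
          Finset.sum_Ico_eq_sum_range]
        simpa [add_comm 1] using halt
      rw [hz, mul_zero]
    -- conclude
    have hsub : derivative (P - Q) = 0 := by rw [derivative_sub, hd, sub_self]
    have h0 : P - Q = Polynomial.C ((P - Q).coeff 0) := eq_C_of_derivative_eq_zero hsub
    have h1 : (P - Q).eval t = 0 := by rw [eval_sub, hev, sub_self]
    rw [h0, eval_C] at h1
    have : P - Q = 0 := by rw [h0, h1, map_zero]
    exact sub_eq_zero.mp this

open Finset in
/-- Abel-type combinatorial identity: for every positive integer `p`,
`∑_{r=1}^{p-1} (r^{r-1}/r!) ((p-r)^{p-r}/(p-r)!) = (p-1) p^{p-1}/p!` in `ℚ`. -/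
theorem abel_combinatorial_identity (p : ℕ) (hp : 0 < p) :
    ∑ r ∈ Finset.Ico 1 p,
        ((r : ℚ) ^ (r - 1) / (Nat.factorial r : ℚ)) *
          (((p - r : ℕ) : ℚ) ^ (p - r) / (Nat.factorial (p - r) : ℚ)) =
      ((p : ℚ) - 1) * (p : ℚ) ^ (p - 1) / (Nat.factorial p : ℚ) := by
  have hIcc : ∑ k ∈ Finset.Icc 1 p, ((p.choose k : ℚ) * (k:ℚ)^(k-1) * ((p - k : ℕ):ℚ)^(p-k))
      = (p:ℚ) * (p:ℚ)^(p-1) := by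
    have h := congrArg (Polynomial.eval (0:ℚ)) (key p hp 0)
    simpa [Polynomial.eval_finset_sum, mul_assoc] using h
  have hsplit : ∑ k ∈ Finset.Icc 1 p, ((p.choose k : ℚ) * (k:ℚ)^(k-1) * ((p - k : ℕ):ℚ)^(p-k))
      = (∑ r ∈ Finset.Ico 1 p, ((p.choose r : ℚ) * (r:ℚ)^(r-1) * ((p - r : ℕ):ℚ)^(p-r)))
        + (p:ℚ)^(p-1) := by
    rw [← Finset.Ico_add_one_right_eq_Icc, Finset.sum_Ico_succ_top hp]
    simp
  have hsum : ∑ r ∈ Finset.Ico 1 p, ((p.choose r : ℚ) * (r:ℚ)^(r-1) * ((p - r : ℕ):ℚ)^(p-r))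
      = (p:ℚ) * (p:ℚ)^(p-1) - (p:ℚ)^(p-1) := by
    rw [← hIcc, hsplit]; ring
  have hterm : ∀ r ∈ Finset.Ico 1 p,
      ((r : ℚ) ^ (r - 1) / (Nat.factorial r : ℚ)) *
          (((p - r : ℕ) : ℚ) ^ (p - r) / (Nat.factorial (p - r) : ℚ))
      = ((p.choose r : ℚ) * (r:ℚ)^(r-1) * ((p - r : ℕ):ℚ)^(p-r)) / (Nat.factorial p : ℚ) := by
    intro r hr
    obtain ⟨hr1, hr2⟩ := Finset.mem_Ico.mp hr
    have hrp : r ≤ p := le_of_lt hr2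
    have hfac := Nat.choose_mul_factorial_mul_factorial hrp
    have hfq : (p.choose r : ℚ) * (Nat.factorial r : ℚ) * (Nat.factorial (p - r) : ℚ)
        = (Nat.factorial p : ℚ) := by exact_mod_cast hfac
    have h1 : ((Nat.factorial r : ℚ) * (Nat.factorial (p-r) : ℚ)) ≠ 0 := by
      positivity
    have h2 : (Nat.factorial p : ℚ) ≠ 0 := by positivity
    rw [div_mul_div_comm, div_eq_div_iff h1 h2]
    linear_combination (-(r:ℚ)^(r-1) * ((p - r : ℕ):ℚ)^(p-r)) * hfq
  rw [Finset.sum_congr rfl hterm, ← Finset.sum_div, hsum]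
  congr 1
  ring
end

section
/- Let μ be a non-Dirac Borel probability measure on [0,∞). For y > 0 let κ(y) = ∫ 1/(1+yx) dμ(x) and let m₁(μ_y) = κ(y)^{−1} ∫ x/(1+yx) dμ(x) be the mean of the tilted measure μ_y. Then the function y ↦ m₁(μ_y) is strictly decreasing on (0,∞). -/
open MeasureTheory Filter Topology Real


lemma aux_ae_nonneg (μ : Measure ℝ) (hsupp : μ (Set.Iio 0) = 0) : ∀ᵐ x ∂μ, 0 ≤ x := by
  rw [ae_iff]
  convert hsupp using 2
  ext x; simp [not_le]

lemma aux_int_inv (μ : Measure ℝ) [IsProbabilityMeasure μ] (hx : ∀ᵐ x ∂μ, 0 ≤ x)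
    {y : ℝ} (hy : 0 < y) : Integrable (fun x => (1 + y * x)⁻¹) μ := by
  refine Integrable.mono' (integrable_const 1)
    ((measurable_const.add (measurable_const.mul measurable_id)).inv.aestronglyMeasurable) ?_
  filter_upwards [hx] with x hx0
  have h1 : (1:ℝ) ≤ 1 + y * x := by nlinarith
  have h0 : (0:ℝ) < 1 + y * x := by linarith
  rw [Real.norm_eq_abs, abs_of_nonneg (by positivity)]
  exact inv_le_one_of_one_le₀ h1

lemma aux_int_div (μ : Measure ℝ) [IsProbabilityMeasure μ] (hx : ∀ᵐ x ∂μ, 0 ≤ x)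
    {y : ℝ} (hy : 0 < y) : Integrable (fun x => x / (1 + y * x)) μ := by
  refine Integrable.mono' (integrable_const (1/y))
    ((measurable_id.div (measurable_const.add (measurable_const.mul measurable_id))).aestronglyMeasurable) ?_
  filter_upwards [hx] with x hx0
  have h0 : (0:ℝ) < 1 + y * x := by nlinarith
  rw [Real.norm_eq_abs, abs_of_nonneg (by positivity)]
  rw [div_le_div_iff₀ h0 hy]
  nlinarith

lemma aux_B_pos (μ : Measure ℝ) [IsProbabilityMeasure μ] (hsupp : μ (Set.Iio 0) = 0)
    {y : ℝ} (hy : 0 < y) : 0 < ∫ x, (1 + y * x)⁻¹ ∂μ := by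
  have hx := aux_ae_nonneg μ hsupp
  have hnn : 0 ≤ᵐ[μ] fun x => (1 + y * x)⁻¹ := by
    filter_upwards [hx] with x hx0
    positivity
  rw [integral_pos_iff_support_of_nonneg_ae hnn (aux_int_inv μ hx hy)]
  have hsub : Set.Iio (0:ℝ) ∪ Function.support (fun x => (1 + y * x)⁻¹) = Set.univ := by
    ext x
    simp only [Set.mem_union, Set.mem_univ, iff_true, Function.mem_support, Set.mem_Iio]
    by_cases h : x < 0
    · exact Or.inl h
    · right
      have : (0:ℝ) < 1 + y * x := by nlinarith [not_lt.mp h]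
      positivity
  by_contra h
  push_neg at h
  have h0 : μ (Function.support (fun x => (1 + y * x)⁻¹)) = 0 := le_antisymm h zero_le
  have := measure_union_le (μ := μ) (Set.Iio (0:ℝ)) (Function.support (fun x => (1 + y * x)⁻¹))
  rw [hsub, hsupp, h0] at this
  simp at this


-- non-Dirac implies the off-diagonal has positive product measure
lemma aux_offdiag_pos (μ : Measure ℝ) [IsProbabilityMeasure μ]
    (hnd : ∀ a : ℝ, μ ≠ Measure.dirac a) :
    0 < (μ.prod μ) {p : ℝ × ℝ | p.1 ≠ p.2} := by
  by_contra h
  push_neg at h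
  have hD : MeasurableSet {p : ℝ × ℝ | p.1 = p.2} :=
    measurableSet_eq_fun measurable_fst measurable_snd
  have h0 : (μ.prod μ) {p : ℝ × ℝ | p.1 ≠ p.2} = 0 := le_antisymm h zero_le
  have hset : {p : ℝ × ℝ | p.1 ≠ p.2} = {p : ℝ × ℝ | p.1 = p.2}ᶜ := rfl
  rw [hset, Measure.measure_prod_null hD.compl] at h0
  have hae : ∀ᵐ x ∂μ, μ ({x}ᶜ) = 0 := by
    filter_upwards [h0] with x hx
    have : Prod.mk x ⁻¹' {p : ℝ × ℝ | p.1 = p.2}ᶜ = {x}ᶜ := by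
      ext w; simp [eq_comm]
    rwa [this] at hx
  haveI : (ae μ).NeBot := ae_neBot.mpr (IsProbabilityMeasure.ne_zero μ)
  obtain ⟨a, ha⟩ := hae.exists
  refine hnd a (Measure.ext fun s hs => ?_)
  rw [Measure.dirac_apply' a hs]
  by_cases has : a ∈ s
  · have : μ sᶜ = 0 := measure_mono_null (by simpa using has : sᶜ ⊆ {a}ᶜ) ha
    rw [(prob_compl_eq_zero_iff hs).mp this]
    simp [has]
  · have : μ s = 0 := measure_mono_null (fun x hx => by rintro rfl; exact has hx) ha
    rw [this]
    simp [has]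


section
variable (μ : Measure ℝ) [IsProbabilityMeasure μ]

lemma aux_key (hsupp : μ (Set.Iio 0) = 0) (hnd : ∀ a : ℝ, μ ≠ Measure.dirac a)
    (hx : ∀ᵐ x ∂μ, 0 ≤ x)
    {y z : ℝ} (hy : 0 < y) (hz : 0 < z) (hyz : y < z) :
    (∫ x, x / (1 + z * x) ∂μ) * (∫ x, (1 + y * x)⁻¹ ∂μ)
      < (∫ x, x / (1 + y * x) ∂μ) * (∫ x, (1 + z * x)⁻¹ ∂μ) := by
  set P := μ.prod μ with hP
  -- a.e. nonneg coordinates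
  have hq1 : P {p : ℝ × ℝ | p.1 < 0} = 0 := by
    have : {p : ℝ × ℝ | p.1 < 0} = Set.Iio 0 ×ˢ Set.univ := by ext p; simp
    rw [this, Measure.prod_prod, hsupp, zero_mul]
  have hq2 : P {p : ℝ × ℝ | p.2 < 0} = 0 := by
    have : {p : ℝ × ℝ | p.2 < 0} = Set.univ ×ˢ Set.Iio 0 := by ext p; simp
    rw [this, Measure.prod_prod, hsupp, mul_zero]
  have hPnn : ∀ᵐ p ∂P, 0 ≤ p.1 ∧ 0 ≤ p.2 := by
    rw [ae_iff]
    refine measure_mono_null (fun p hp => ?_) (measure_union_null hq1 hq2)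
    simp only [Set.mem_setOf_eq, not_and_or, not_le] at hp
    simpa using hp
  set F : ℝ × ℝ → ℝ := fun p =>
    p.1 / (1 + y * p.1) * (1 + z * p.2)⁻¹ - p.1 / (1 + z * p.1) * (1 + y * p.2)⁻¹ with hF
  set G : ℝ × ℝ → ℝ := fun p =>
    (z - y) * (p.1 - p.2)^2 *
      ((1 + y * p.1) * (1 + z * p.2) * (1 + z * p.1) * (1 + y * p.2))⁻¹ with hG
  have hi1 : Integrable (fun p : ℝ × ℝ => p.1 / (1 + y * p.1) * (1 + z * p.2)⁻¹) P :=
    (aux_int_div μ hx hy).mul_prod (aux_int_inv μ hx hz)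
  have hi2 : Integrable (fun p : ℝ × ℝ => p.1 / (1 + z * p.1) * (1 + y * p.2)⁻¹) P :=
    (aux_int_div μ hx hz).mul_prod (aux_int_inv μ hx hy)
  have hi3 : Integrable (fun p : ℝ × ℝ => (1 + z * p.1)⁻¹ * (p.2 / (1 + y * p.2))) P :=
    (aux_int_inv μ hx hz).mul_prod (aux_int_div μ hx hy)
  have hi4 : Integrable (fun p : ℝ × ℝ => (1 + y * p.1)⁻¹ * (p.2 / (1 + z * p.2))) P :=
    (aux_int_inv μ hx hy).mul_prod (aux_int_div μ hx hz)
  have hFi : Integrable F P := hi1.sub hi2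
  have hFswapi : Integrable (fun p : ℝ × ℝ => F p.swap) P := by
    have := hi3.sub hi4
    simpa [hF, Prod.swap, mul_comm, Pi.sub_def] using this
  -- ∫ F = ∫ F ∘ swap
  have hswap : ∫ p, F p.swap ∂P = ∫ p, F p ∂P := integral_prod_swap F
  -- a.e. identity: F p + F p.swap = G p
  have hid : ∀ᵐ p ∂P, F p + F p.swap = G p := by
    filter_upwards [hPnn] with p hp
    obtain ⟨h1, h2⟩ := hp
    have d1 : (0:ℝ) < 1 + y * p.1 := by nlinarith
    have d2 : (0:ℝ) < 1 + z * p.1 := by nlinarith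
    have d3 : (0:ℝ) < 1 + y * p.2 := by nlinarith
    have d4 : (0:ℝ) < 1 + z * p.2 := by nlinarith
    simp only [hF, hG, Prod.fst_swap, Prod.snd_swap]
    field_simp
    ring
  have hGi : Integrable G P := (hFi.add hFswapi).congr hid
  have hGnn : 0 ≤ᵐ[P] G := by
    filter_upwards [hPnn] with p hp
    obtain ⟨h1, h2⟩ := hp
    have d1 : (0:ℝ) < 1 + y * p.1 := by nlinarith
    have d2 : (0:ℝ) < 1 + z * p.1 := by nlinarith
    have d3 : (0:ℝ) < 1 + y * p.2 := by nlinarith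
    have d4 : (0:ℝ) < 1 + z * p.2 := by nlinarith
    have hzy : (0:ℝ) < z - y := by linarith
    simp only [hG]
    positivity
  have hGpos : 0 < ∫ p, G p ∂P := by
    rw [integral_pos_iff_support_of_nonneg_ae hGnn hGi]
    have hsub : {p : ℝ × ℝ | p.1 ≠ p.2} ⊆
        Function.support G ∪ ({p : ℝ × ℝ | p.1 < 0} ∪ {p : ℝ × ℝ | p.2 < 0}) := by
      intro p hp
      by_cases h1 : p.1 < 0
      · exact Or.inr (Or.inl h1)
      by_cases h2 : p.2 < 0
      · exact Or.inr (Or.inr h2)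
      left
      push_neg at h1 h2
      have d1 : (0:ℝ) < 1 + y * p.1 := by nlinarith
      have d2 : (0:ℝ) < 1 + z * p.1 := by nlinarith
      have d3 : (0:ℝ) < 1 + y * p.2 := by nlinarith
      have d4 : (0:ℝ) < 1 + z * p.2 := by nlinarith
      have hzy : (0:ℝ) < z - y := by linarith
      have hsq : (0:ℝ) < (p.1 - p.2)^2 := by
        have := sub_ne_zero.mpr hp
        positivity
      simp only [Function.mem_support, hG]
      positivity
    have := aux_offdiag_pos μ hnd
    by_contra h
    push_neg at h
    have h0 : P (Function.support G) = 0 := le_antisymm h zero_le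
    have : (μ.prod μ) {p : ℝ × ℝ | p.1 ≠ p.2} = 0 :=
      measure_mono_null hsub (measure_union_null h0 (measure_union_null hq1 hq2))
    exact absurd this (aux_offdiag_pos μ hnd).ne'
  -- combine
  have hint : ∫ p, F p ∂P =
      (∫ x, x / (1 + y * x) ∂μ) * (∫ x, (1 + z * x)⁻¹ ∂μ)
        - (∫ x, x / (1 + z * x) ∂μ) * (∫ x, (1 + y * x)⁻¹ ∂μ) := by
    have e1 := integral_prod_mul (μ := μ) (ν := μ)
      (fun x : ℝ => x / (1 + y * x)) (fun x : ℝ => (1 + z * x)⁻¹)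
    have e2 := integral_prod_mul (μ := μ) (ν := μ)
      (fun x : ℝ => x / (1 + z * x)) (fun x : ℝ => (1 + y * x)⁻¹)
    rw [hF, integral_sub hi1 hi2, hP, e1, e2]
  have h2F : 2 * ∫ p, F p ∂P = ∫ p, G p ∂P := by
    rw [two_mul]
    nth_rewrite 2 [← hswap]
    rw [← integral_add hFi hFswapi]
    exact integral_congr_ae hid
  have : 0 < ∫ p, F p ∂P := by linarith
  linarith [hint ▸ this]
end

/-- For a non-Dirac probability measure `μ` on `[0,∞)`, the mean of the tilted measure
`μ_y(dx) = κ(y)⁻¹ (1+yx)⁻¹ μ(dx)`, namely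
`m₁(μ_y) = (∫ x/(1+yx) dμ(x)) / (∫ 1/(1+yx) dμ(x))`, is strictly decreasing in
`y ∈ (0,∞)`. -/
theorem tilted_mean_strictAnti
    (μ : Measure ℝ) [IsProbabilityMeasure μ] (hsupp : μ (Set.Iio 0) = 0)
    (hnd : ∀ a : ℝ, μ ≠ Measure.dirac a) :
    StrictAntiOn
      (fun y : ℝ => (∫ x, x / (1 + y * x) ∂μ) / (∫ x, (1 + y * x)⁻¹ ∂μ))
      (Set.Ioi (0 : ℝ)) := by
  intro y hy z hz hyz
  have hy' : 0 < y := hy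
  have hz' : 0 < z := hz
  have hBy := aux_B_pos μ hsupp hy'
  have hBz := aux_B_pos μ hsupp hz'
  simp only
  rw [div_lt_div_iff₀ hBz hBy]
  exact aux_key μ hsupp hnd (aux_ae_nonneg μ hsupp) hy' hz' hyz
end

section
/- Let μ be a Borel probability measure on [0,∞) with m₁(μ) < +∞. Then for every y > 0, m₁(μ_y) = m₁(μ) − (y/(1 + y·m₁(μ))) · ∫ (x − m₁(μ))² dμ_y(x), i.e. m₁(μ_y) = m₁(μ) − (y/(1 + y·m₁(μ))) · κ(y)^{−1} ∫ (x − m₁(μ))²/(1+yx) dμ(x) (and this last integral is finite for y > 0). -/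
open MeasureTheory Filter Topology Real

/-- For a probability measure `μ` on `[0,∞)` with finite mean `m₁ = ∫ t dμ(t)` and the
tilted measure `μ_y(dx) = κ(y)⁻¹(1+yx)⁻¹μ(dx)` with mean
`m₁(μ_y) = (∫ x/(1+yx) dμ)/(∫ 1/(1+yx) dμ)`, for every `y > 0`:
`(x - m₁)²/(1+yx)` is `μ`-integrable and
`m₁(μ_y) = m₁ - (y/(1+y m₁)) · κ(y)⁻¹ ∫ (x-m₁)²/(1+yx) dμ(x)`. -/
theorem tilted_mean_identity
    (μ : Measure ℝ) [IsProbabilityMeasure μ] (hsupp : μ (Set.Iio 0) = 0)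
    (hm1 : Integrable (fun x : ℝ => x) μ) :
    ∀ y : ℝ, 0 < y →
      Integrable (fun x : ℝ => (x - ∫ t, t ∂μ) ^ 2 / (1 + y * x)) μ ∧
      (∫ x, x / (1 + y * x) ∂μ) / (∫ x, (1 + y * x)⁻¹ ∂μ) =
        (∫ t, t ∂μ) - (y / (1 + y * ∫ t, t ∂μ)) *
          ((∫ x, (x - ∫ t, t ∂μ) ^ 2 / (1 + y * x) ∂μ) / (∫ x, (1 + y * x)⁻¹ ∂μ)) := by
  intro y hy
  set m := ∫ t, t ∂μ with hm
  have hx0 : ∀ᵐ x ∂μ, 0 ≤ x := by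
    rw [ae_iff]
    have hset : {x : ℝ | ¬ 0 ≤ x} = Set.Iio 0 := by
      ext x; simp
    rw [hset]; exact hsupp
  have hm0 : 0 ≤ m := integral_nonneg_of_ae hx0
  have hpos : ∀ x : ℝ, 0 ≤ x → 0 < 1 + y * x := fun x hx => by positivity
  have h1m : (0:ℝ) < 1 + y * m := by positivity
  have mb : Measurable fun x : ℝ => 1 + y * x :=
    measurable_const.add (measurable_id.const_mul y)
  have meas1 : AEStronglyMeasurable (fun x : ℝ => (1 + y * x)⁻¹) μ :=
    mb.inv.aestronglyMeasurable
  have meas2 : AEStronglyMeasurable (fun x : ℝ => x / (1 + y * x)) μ :=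
    (measurable_id.div mb).aestronglyMeasurable
  have int1 : Integrable (fun x : ℝ => (1 + y * x)⁻¹) μ := by
    refine Integrable.mono' (integrable_const 1) meas1 ?_
    filter_upwards [hx0] with x hx
    rw [Real.norm_eq_abs, abs_of_nonneg (le_of_lt (inv_pos.2 (hpos x hx)))]
    have h1 : (1:ℝ) ≤ 1 + y * x := by nlinarith
    calc (1 + y * x)⁻¹ ≤ 1⁻¹ := by
          apply inv_anti₀ one_pos h1
      _ = 1 := by norm_num
  have int2 : Integrable (fun x : ℝ => x / (1 + y * x)) μ := by
    refine Integrable.mono' (integrable_const (1/y)) meas2 ?_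
    filter_upwards [hx0] with x hx
    rw [Real.norm_eq_abs, abs_of_nonneg (div_nonneg hx (le_of_lt (hpos x hx)))]
    rw [div_le_div_iff₀ (hpos x hx) hy]
    nlinarith
  -- the auxiliary function equal a.e. to the squared term
  have ia : Integrable (fun a : ℝ => a - m) μ := by
    exact hm1.sub (integrable_const m)
  have ib : Integrable (fun a : ℝ => a / (1 + y * a) - m * (1 + y * a)⁻¹) μ := by
    exact int2.sub (int1.const_mul m)
  have ia' : Integrable (fun a : ℝ => y⁻¹ * (a - m)) μ := ia.const_mul _
  have ib' : Integrable (fun a : ℝ =>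
      y⁻¹ * (1 + y * m) * (a / (1 + y * a) - m * (1 + y * a)⁻¹)) μ := ib.const_mul _
  have intaux : Integrable (fun x : ℝ =>
      y⁻¹ * (x - m) - y⁻¹ * (1 + y * m) * (x / (1 + y * x) - m * (1 + y * x)⁻¹)) μ := by
    exact ia'.sub ib'
  have haeeq : (fun x : ℝ => (x - m) ^ 2 / (1 + y * x)) =ᵐ[μ]
      (fun x : ℝ =>
      y⁻¹ * (x - m) - y⁻¹ * (1 + y * m) * (x / (1 + y * x) - m * (1 + y * x)⁻¹)) := by
    filter_upwards [hx0] with x hx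
    have h := hpos x hx
    field_simp
    ring
  have int3 : Integrable (fun x : ℝ => (x - m) ^ 2 / (1 + y * x)) μ :=
    intaux.congr haeeq.symm
  refine ⟨int3, ?_⟩
  -- notation
  set A := ∫ x, x / (1 + y * x) ∂μ with hA
  set K := ∫ x, (1 + y * x)⁻¹ ∂μ with hK
  set V := ∫ x, (x - m) ^ 2 / (1 + y * x) ∂μ with hV
  -- K > 0
  have hKpos : 0 < K := by
    rw [hK]
    rw [integral_pos_iff_support_of_nonneg_ae _ int1]
    · have h1 : μ (Set.Ici (0:ℝ)) = 1 := by
        have := measure_compl (measurableSet_Iio (a := (0:ℝ))) (measure_ne_top μ _)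
        rw [hsupp] at this
        simpa [Set.compl_Iio] using this
      have hsub : Set.Ici (0:ℝ) ⊆ Function.support (fun x : ℝ => (1 + y * x)⁻¹) := by
        intro x hx
        simp only [Function.mem_support, ne_eq, inv_eq_zero]
        exact ne_of_gt (hpos x hx)
      calc (0:ENNReal) < 1 := by norm_num
        _ = μ (Set.Ici 0) := h1.symm
        _ ≤ μ (Function.support fun x : ℝ => (1 + y * x)⁻¹) := measure_mono hsub
    · filter_upwards [hx0] with x hx
      exact le_of_lt (inv_pos.2 (hpos x hx))
  -- compute V
  have hVeq : V = y⁻¹ * (m - m) - y⁻¹ * (1 + y * m) * (A - m * K) := by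
    rw [hV, integral_congr_ae haeeq]
    rw [integral_sub ia' ib', integral_const_mul, integral_const_mul,
      integral_sub hm1 (integrable_const m),
      integral_sub int2 (int1.const_mul m),
      integral_const, integral_const_mul]
    simp [hm, hA, hK]
  have hAeq : A = m * K - (y / (1 + y * m)) * V := by
    rw [hVeq]
    field_simp
    ring
  rw [hAeq]
  field_simp
end

section
/- Let μ be a Borel probability measure on [0,∞) with m₁(μ) < +∞. If m₂(μ) < +∞, then lim_{y→0+} (m₁(μ_y) − m₁(μ))/y = −Var(μ); if m₂(μ) = +∞, then (m₁(μ_y) − m₁(μ))/y → −∞ as y → 0+. -/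
open MeasureTheory Filter Topology Real

section TiltedAux

set_option linter.unusedSectionVars false

variable {μ : Measure ℝ} [IsProbabilityMeasure μ]


lemma ae_nn (hsupp : μ (Set.Iio 0) = 0) : ∀ᵐ x ∂μ, 0 ≤ x := by
  rw [ae_iff]; simp only [not_le]; exact hsupp

lemma den_one_le {y x : ℝ} (hy : 0 < y) (hx : 0 ≤ x) : (1:ℝ) ≤ 1 + y * x := by nlinarith

lemma meas1 (y : ℝ) : Measurable fun x : ℝ => x / (1 + y * x) :=
  measurable_id.div (measurable_const.add (measurable_const.mul measurable_id))

lemma meas2 (y : ℝ) : Measurable fun x : ℝ => (1 + y * x)⁻¹ :=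
  (measurable_const.add (measurable_const.mul measurable_id)).inv

lemma meas3 (y : ℝ) : Measurable fun x : ℝ => x ^ 2 / (1 + y * x) :=
  (measurable_id.pow_const 2).div (measurable_const.add (measurable_const.mul measurable_id))

lemma int1 (hsupp : μ (Set.Iio 0) = 0) (hm1 : Integrable (fun x : ℝ => x) μ)
    {y : ℝ} (hy : 0 < y) : Integrable (fun x : ℝ => x / (1 + y * x)) μ := by
  refine hm1.norm.mono' (meas1 y).aestronglyMeasurable ?_
  filter_upwards [ae_nn hsupp] with x hx
  have h := den_one_le hy hx
  simp only [Real.norm_eq_abs, abs_abs]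
  rw [abs_of_nonneg (by positivity : (0:ℝ) ≤ x / (1 + y * x)), abs_of_nonneg hx,
    div_le_iff₀ (by linarith)]
  nlinarith

lemma int2 {y : ℝ} (hsupp : μ (Set.Iio 0) = 0) (hy : 0 < y) :
    Integrable (fun x : ℝ => (1 + y * x)⁻¹) μ := by
  refine (integrable_const (1:ℝ)).mono' (meas2 y).aestronglyMeasurable ?_
  filter_upwards [ae_nn hsupp] with x hx
  have h := den_one_le hy hx
  rw [Real.norm_eq_abs, abs_of_nonneg (by positivity)]
  rw [inv_le_one_iff₀]; right; exact h

lemma int3 (hsupp : μ (Set.Iio 0) = 0) (hm1 : Integrable (fun x : ℝ => x) μ)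
    {y : ℝ} (hy : 0 < y) : Integrable (fun x : ℝ => x ^ 2 / (1 + y * x)) μ := by
  refine ((hm1.norm.const_mul y⁻¹)).mono' (meas3 y).aestronglyMeasurable ?_
  filter_upwards [ae_nn hsupp] with x hx
  have h := den_one_le hy hx
  rw [Real.norm_eq_abs, abs_of_nonneg (by positivity), Real.norm_eq_abs, abs_of_nonneg hx]
  rw [div_le_iff₀ (by linarith)]
  have : y * (x^2) ≤ x * (1 + y*x) := by nlinarith
  calc x^2 = y⁻¹ * (y * x^2) := by field_simp
  _ ≤ y⁻¹ * (x * (1+y*x)) := by apply mul_le_mul_of_nonneg_left this (by positivity)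
  _ = y⁻¹ * x * (1+y*x) := by ring

lemma B_eq (hsupp : μ (Set.Iio 0) = 0) (hm1 : Integrable (fun x : ℝ => x) μ)
    {y : ℝ} (hy : 0 < y) :
    ∫ x, (1 + y * x)⁻¹ ∂μ = 1 - y * ∫ x, x / (1 + y * x) ∂μ := by
  have h1 : ∫ x, (1 + y * x)⁻¹ ∂μ = ∫ x, (1 - y * (x / (1 + y * x))) ∂μ := by
    refine integral_congr_ae ?_
    filter_upwards [ae_nn hsupp] with x hx
    have h := den_one_le hy hx
    field_simp; ring
  rw [h1, integral_sub (integrable_const 1) ((int1 hsupp hm1 hy).const_mul y),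
    integral_const, integral_const_mul]
  simp

lemma A_eq (hsupp : μ (Set.Iio 0) = 0) (hm1 : Integrable (fun x : ℝ => x) μ)
    {y : ℝ} (hy : 0 < y) :
    ∫ x, x / (1 + y * x) ∂μ = (∫ x, x ∂μ) - y * ∫ x, x ^ 2 / (1 + y * x) ∂μ := by
  have h1 : ∫ x, x / (1 + y * x) ∂μ = ∫ x, (x - y * (x ^ 2 / (1 + y * x))) ∂μ := by
    refine integral_congr_ae ?_
    filter_upwards [ae_nn hsupp] with x hx
    have h := den_one_le hy hx
    field_simp; ring
  rw [h1, integral_sub hm1 ((int3 hsupp hm1 hy).const_mul y), integral_const_mul]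

lemma B_pos (hsupp : μ (Set.Iio 0) = 0) {y : ℝ} (hy : 0 < y) :
    0 < ∫ x, (1 + y * x)⁻¹ ∂μ := by
  have hnn : 0 ≤ᵐ[μ] fun x : ℝ => (1 + y * x)⁻¹ := by
    filter_upwards [ae_nn hsupp] with x hx
    have h := den_one_le hy hx
    positivity
  refine (integral_pos_iff_support_of_nonneg_ae hnn (int2 hsupp hy)).2 ?_
  have hs : (Function.support fun x : ℝ => (1 + y * x)⁻¹) ∈ ae μ := by
    filter_upwards [ae_nn hsupp] with x hx
    have h := den_one_le hy hx
    simp only [Function.mem_support]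
    exact inv_ne_zero (by linarith)
  have h2 : μ (Function.support fun x : ℝ => (1 + y * x)⁻¹)ᶜ = 0 := mem_ae_iff.1 hs
  by_contra hc
  push_neg at hc
  have h0 : μ (Function.support fun x : ℝ => (1 + y * x)⁻¹) = 0 := le_antisymm hc zero_le
  have := measure_union_le (μ := μ) (Function.support fun x : ℝ => (1 + y * x)⁻¹)
    (Function.support fun x : ℝ => (1 + y * x)⁻¹)ᶜ
  rw [Set.union_compl_self, h0, h2, measure_univ] at this
  simp at this



lemma den_tendsto (x : ℝ) : Tendsto (fun y : ℝ => 1 + y * x) (𝓝 0) (𝓝 1) := by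
  have h : Continuous fun y : ℝ => 1 + y * x := by continuity
  simpa using h.tendsto 0

lemma tendsto_A (hsupp : μ (Set.Iio 0) = 0) (hm1 : Integrable (fun x : ℝ => x) μ) :
    Tendsto (fun y : ℝ => ∫ x, x / (1 + y * x) ∂μ) (𝓝[>] (0:ℝ)) (𝓝 (∫ x, x ∂μ)) := by
  refine tendsto_integral_filter_of_dominated_convergence (fun x => |x|)
    (Eventually.of_forall fun y =>
      (measurable_id.div (measurable_const.add (measurable_const.mul measurable_id))).aestronglyMeasurable)
    ?_ hm1.abs ?_
  · filter_upwards [self_mem_nhdsWithin] with y (hy : (0:ℝ) < y)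
    filter_upwards [ae_nn hsupp] with x hx
    have h : (1:ℝ) ≤ 1 + y * x := by nlinarith
    rw [Real.norm_eq_abs, abs_of_nonneg (by positivity : (0:ℝ) ≤ x / (1 + y * x)),
      abs_of_nonneg hx, div_le_iff₀ (by linarith)]
    nlinarith
  · refine Eventually.of_forall fun x => ?_
    have h := (tendsto_const_nhds (x := x)).div (den_tendsto x) one_ne_zero
    simp only [div_one] at h
    exact h.mono_left nhdsWithin_le_nhds

lemma tendsto_B (hsupp : μ (Set.Iio 0) = 0) :
    Tendsto (fun y : ℝ => ∫ x, (1 + y * x)⁻¹ ∂μ) (𝓝[>] (0:ℝ)) (𝓝 1) := by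
  have key : Tendsto (fun y : ℝ => ∫ x, (1 + y * x)⁻¹ ∂μ) (𝓝[>] (0:ℝ))
      (𝓝 (∫ _x, (1:ℝ) ∂μ)) := by
    refine tendsto_integral_filter_of_dominated_convergence (fun _ => (1:ℝ))
      (Eventually.of_forall fun y =>
        ((measurable_const.add (measurable_const.mul measurable_id)).inv).aestronglyMeasurable)
      ?_ (integrable_const 1) ?_
    · filter_upwards [self_mem_nhdsWithin] with y (hy : (0:ℝ) < y)
      filter_upwards [ae_nn hsupp] with x hx
      have h : (1:ℝ) ≤ 1 + y * x := by nlinarith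
      rw [Real.norm_eq_abs, abs_of_nonneg (by positivity)]
      rw [inv_le_one_iff₀]; right; exact h
    · refine Eventually.of_forall fun x => ?_
      have h := ((den_tendsto x).inv₀ one_ne_zero).mono_left (nhdsWithin_le_nhds (s := Set.Ioi 0))
      simpa using h
  simpa using key

lemma tendsto_C (hsupp : μ (Set.Iio 0) = 0) (hm2 : Integrable (fun x : ℝ => x ^ 2) μ) :
    Tendsto (fun y : ℝ => ∫ x, x ^ 2 / (1 + y * x) ∂μ) (𝓝[>] (0:ℝ)) (𝓝 (∫ x, x ^ 2 ∂μ)) := by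
  refine tendsto_integral_filter_of_dominated_convergence (fun x => x ^ 2)
    (Eventually.of_forall fun y =>
      ((measurable_id.pow_const 2).div (measurable_const.add (measurable_const.mul measurable_id))).aestronglyMeasurable)
    ?_ hm2 ?_
  · filter_upwards [self_mem_nhdsWithin] with y (hy : (0:ℝ) < y)
    filter_upwards [ae_nn hsupp] with x hx
    have h : (1:ℝ) ≤ 1 + y * x := by nlinarith
    rw [Real.norm_eq_abs, abs_of_nonneg (by positivity : (0:ℝ) ≤ x ^ 2 / (1 + y * x)),
      div_le_iff₀ (by linarith)]
    nlinarith [sq_nonneg x]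
  · refine Eventually.of_forall fun x => ?_
    have h := (tendsto_const_nhds (x := x ^ 2)).div (den_tendsto x) one_ne_zero
    simp only [div_one] at h
    exact h.mono_left nhdsWithin_le_nhds



lemma C_anti (hsupp : μ (Set.Iio 0) = 0) (hm1 : Integrable (fun x : ℝ => x) μ)
    {y₁ y₂ : ℝ} (h1 : 0 < y₁) (h2 : y₁ ≤ y₂) :
    ∫ x, x ^ 2 / (1 + y₂ * x) ∂μ ≤ ∫ x, x ^ 2 / (1 + y₁ * x) ∂μ := by
  refine integral_mono_ae (int3 hsupp hm1 (h1.trans_le h2)) (int3 hsupp hm1 h1) ?_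
  filter_upwards [ae_nn hsupp] with x hx
  have hd1 : (0:ℝ) < 1 + y₁ * x := by nlinarith
  have hd2 : 1 + y₁ * x ≤ 1 + y₂ * x := by nlinarith
  exact div_le_div_of_nonneg_left (sq_nonneg x) hd1 hd2

lemma C_unbounded (hsupp : μ (Set.Iio 0) = 0) (hm1 : Integrable (fun x : ℝ => x) μ)
    (hm2 : ¬ Integrable (fun x : ℝ => x ^ 2) μ) (M : ℝ) :
    ∃ y : ℝ, 0 < y ∧ M < ∫ x, x ^ 2 / (1 + y * x) ∂μ := by
  by_contra hc
  push_neg at hc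
  apply hm2
  have key : ∫⁻ x, ENNReal.ofReal (x ^ 2) ∂μ ≤ ENNReal.ofReal M := by
    set g : ℕ → ℝ → ENNReal := fun n x => ENNReal.ofReal (x ^ 2 / (1 + ((n:ℝ)+1)⁻¹ * x)) with hg
    have hmeas : ∀ n, Measurable (g n) := fun n =>
      ENNReal.measurable_ofReal.comp
        ((measurable_id.pow_const 2).div (measurable_const.add (measurable_const.mul measurable_id)))
    have hfatou := lintegral_liminf_le (μ := μ) (u := atTop) hmeas
    have hlim : ∀ᵐ x ∂μ, liminf (fun n => g n x) atTop = ENNReal.ofReal (x ^ 2) := by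
      filter_upwards [ae_nn hsupp] with x hx
      have hy : Tendsto (fun n : ℕ => ((n:ℝ)+1)⁻¹) atTop (𝓝 0) :=
        tendsto_one_div_add_atTop_nhds_zero_nat.congr (by intro n; rw [one_div])
      have hden : Tendsto (fun n : ℕ => 1 + ((n:ℝ)+1)⁻¹ * x) atTop (𝓝 1) := by
        have h2 : Tendsto (fun n : ℕ => ((n:ℝ)+1)⁻¹ * x) atTop (𝓝 (0 * x)) :=
          hy.mul tendsto_const_nhds
        have h3 := h2.const_add 1
        simpa using h3
      have hreal : Tendsto (fun n : ℕ => x ^ 2 / (1 + ((n:ℝ)+1)⁻¹ * x)) atTop (𝓝 (x ^ 2)) := by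
        have := (tendsto_const_nhds (x := x ^ 2)).div hden one_ne_zero
        simpa only [div_one, Pi.div_def] using this
      have : Tendsto (fun n => g n x) atTop (𝓝 (ENNReal.ofReal (x ^ 2))) :=
        (ENNReal.continuous_ofReal.tendsto _).comp hreal
      exact this.liminf_eq
    have h1 : ∫⁻ x, ENNReal.ofReal (x ^ 2) ∂μ = ∫⁻ x, liminf (fun n => g n x) atTop ∂μ :=
      lintegral_congr_ae (hlim.mono fun x h => h.symm)
    have h2 : ∀ n, ∫⁻ x, g n x ∂μ ≤ ENNReal.ofReal M := by
      intro n
      have hyp : (0:ℝ) < ((n:ℝ)+1)⁻¹ := by positivity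
      have hnn : 0 ≤ᵐ[μ] fun x : ℝ => x ^ 2 / (1 + ((n:ℝ)+1)⁻¹ * x) := by
        filter_upwards [ae_nn hsupp] with x hx
        have : (0:ℝ) < 1 + ((n:ℝ)+1)⁻¹ * x := by nlinarith
        positivity
      rw [hg]
      rw [← ofReal_integral_eq_lintegral_ofReal (int3 hsupp hm1 hyp) hnn]
      exact ENNReal.ofReal_le_ofReal (hc _ hyp)
    have h3 : liminf (fun n => ∫⁻ x, g n x ∂μ) atTop ≤ ENNReal.ofReal M := by
      refine liminf_le_of_frequently_le ?_
      exact Frequently.of_forall h2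
    rw [h1]
    exact hfatou.trans h3
  refine ⟨(measurable_id.pow_const 2).aestronglyMeasurable, ?_⟩
  rw [hasFiniteIntegral_iff_norm]
  have : ∀ x : ℝ, ENNReal.ofReal ‖x ^ 2‖ = ENNReal.ofReal (x ^ 2) := fun x => by
    rw [Real.norm_eq_abs, abs_of_nonneg (sq_nonneg x)]
  calc ∫⁻ x, ENNReal.ofReal ‖x ^ 2‖ ∂μ = ∫⁻ x, ENNReal.ofReal (x ^ 2) ∂μ :=
        lintegral_congr fun x => this x
  _ ≤ ENNReal.ofReal M := key
  _ < ⊤ := ENNReal.ofReal_lt_top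

lemma tendsto_C_top (hsupp : μ (Set.Iio 0) = 0) (hm1 : Integrable (fun x : ℝ => x) μ)
    (hm2 : ¬ Integrable (fun x : ℝ => x ^ 2) μ) :
    Tendsto (fun y : ℝ => ∫ x, x ^ 2 / (1 + y * x) ∂μ) (𝓝[>] (0:ℝ)) atTop := by
  rw [tendsto_atTop]
  intro M
  obtain ⟨y₀, hy₀, hM⟩ := C_unbounded hsupp hm1 hm2 M
  filter_upwards [Ioc_mem_nhdsGT hy₀] with y hy
  exact le_trans hM.le (C_anti hsupp hm1 hy.1 hy.2)

end TiltedAux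

/-- For a probability measure `μ` on `[0,∞)` with finite mean, and the mean
`m₁(μ_y) = (∫ x/(1+yx) dμ)/(∫ 1/(1+yx) dμ)` of the tilted measure `μ_y`:
if `m₂(μ) < ∞` then `(m₁(μ_y) - m₁(μ))/y → -Var(μ)` as `y → 0+`, and if
`m₂(μ) = ∞` then `(m₁(μ_y) - m₁(μ))/y → -∞` as `y → 0+`. -/
theorem tilted_mean_derivative_at_zero
    (μ : Measure ℝ) [IsProbabilityMeasure μ] (hsupp : μ (Set.Iio 0) = 0)
    (hm1 : Integrable (fun x : ℝ => x) μ) :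
    (Integrable (fun x : ℝ => x ^ 2) μ →
      Tendsto (fun y : ℝ =>
          (((∫ x, x / (1 + y * x) ∂μ) / (∫ x, (1 + y * x)⁻¹ ∂μ)) - ∫ t, t ∂μ) / y)
        (𝓝[>] 0) (𝓝 (-((∫ t, t ^ 2 ∂μ) - (∫ t, t ∂μ) ^ 2)))) ∧
    (¬ Integrable (fun x : ℝ => x ^ 2) μ →
      Tendsto (fun y : ℝ =>
          (((∫ x, x / (1 + y * x) ∂μ) / (∫ x, (1 + y * x)⁻¹ ∂μ)) - ∫ t, t ∂μ) / y)
        (𝓝[>] 0) atBot) := by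
  have hkey : ∀ᶠ y in 𝓝[>] (0:ℝ),
      (((∫ x, x / (1 + y * x) ∂μ) / (∫ x, (1 + y * x)⁻¹ ∂μ)) - ∫ t, t ∂μ) / y =
      ((∫ t, t ∂μ) * (∫ x, x / (1 + y * x) ∂μ) - ∫ x, x ^ 2 / (1 + y * x) ∂μ) /
        (∫ x, (1 + y * x)⁻¹ ∂μ) := by
    filter_upwards [self_mem_nhdsWithin] with y (hy : (0:ℝ) < y)
    have e1 := A_eq hsupp hm1 hy
    have e2 := B_eq hsupp hm1 hy
    have hb := B_pos hsupp hy
    set I1 := ∫ x, x / (1 + y * x) ∂μ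
    set I2 := ∫ x, (1 + y * x)⁻¹ ∂μ
    set I3 := ∫ x, x ^ 2 / (1 + y * x) ∂μ
    set m := ∫ t, t ∂μ
    have h4 : I1 / I2 - m = y * ((m * I1 - I3) / I2) := by
      field_simp
      linear_combination e1 - m * e2
    rw [h4, mul_div_cancel_left₀ _ hy.ne']
  constructor
  · intro hm2
    have hT : Tendsto (fun y : ℝ =>
        ((∫ t, t ∂μ) * (∫ x, x / (1 + y * x) ∂μ) - ∫ x, x ^ 2 / (1 + y * x) ∂μ) /
          (∫ x, (1 + y * x)⁻¹ ∂μ)) (𝓝[>] (0:ℝ))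
        (𝓝 (((∫ t, t ∂μ) * (∫ t, t ∂μ) - ∫ t, t ^ 2 ∂μ) / 1)) :=
      (((tendsto_A hsupp hm1).const_mul _).sub (tendsto_C hsupp hm2)).div
        (tendsto_B hsupp) one_ne_zero
    have : ((∫ t, t ∂μ) * (∫ t, t ∂μ) - ∫ t, t ^ 2 ∂μ) / 1
        = -((∫ t, t ^ 2 ∂μ) - (∫ t, t ∂μ) ^ 2) := by ring
    rw [this] at hT
    exact hT.congr' (hkey.mono fun y h => h.symm)
  · intro hm2
    have h1 : Tendsto (fun y : ℝ =>
        (∫ t, t ∂μ) * (∫ x, x / (1 + y * x) ∂μ) - ∫ x, x ^ 2 / (1 + y * x) ∂μ)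
        (𝓝[>] (0:ℝ)) atBot := by
      simp only [sub_eq_add_neg]
      exact (((tendsto_A hsupp hm1).const_mul _)).add_atBot
        (tendsto_neg_atTop_atBot.comp (tendsto_C_top hsupp hm1 hm2))
    have h2 : Tendsto (fun y : ℝ => (∫ x, (1 + y * x)⁻¹ ∂μ)⁻¹) (𝓝[>] (0:ℝ)) (𝓝 1) := by
      have := (tendsto_B hsupp).inv₀ one_ne_zero
      simpa using this
    have hT := h1.atBot_mul_pos (zero_lt_one) h2
    simp only [div_eq_mul_inv] at hkey ⊢
    exact hT.congr' (hkey.mono fun y h => by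
      simpa [div_eq_mul_inv] using h.symm)
end

section
/- Let μ be a Borel probability measure on [0,∞) such that μ((t,∞)) ~ c t^{−α} as t → +∞ for some α ∈ (1,2) and c > 0 (so in particular m₁(μ) < +∞). Then, as y → 0+, m₁(μ_y) = m₁(μ) + (πα/sin(πα)) · c · y^{α−1} · (1+o(1)); that is, lim_{y→0+} (m₁(μ_y) − m₁(μ))/y^{α−1} = πα c/sin(πα). (Note sin(πα) < 0 for α ∈ (1,2).) -/
open MeasureTheory Filter Topology Real


lemma real_beta_Ioo {a b : ℝ} (ha : 0 < a) (hb : 0 < b) :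
    ∫ x in Set.Ioo (0:ℝ) 1, x ^ (a-1) * (1-x) ^ (b-1) =
      Real.Gamma a * Real.Gamma b / Real.Gamma (a+b) := by
  have hab : (0:ℝ) < a + b := by linarith
  have hΓ : Real.Gamma (a+b) ≠ 0 := (Real.Gamma_pos_of_pos hab).ne'
  have key := Complex.Gamma_mul_Gamma_eq_betaIntegral
    (show 0 < (a:ℂ).re by simpa using ha) (show 0 < (b:ℂ).re by simpa using hb)
  have hβ : Complex.betaIntegral (a:ℂ) (b:ℂ) =
      ((∫ x in Set.Ioo (0:ℝ) 1, x ^ (a-1) * (1-x) ^ (b-1) : ℝ) : ℂ) := by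
    rw [Complex.betaIntegral, intervalIntegral.integral_of_le zero_le_one,
      MeasureTheory.integral_Ioc_eq_integral_Ioo]
    calc ∫ x in Set.Ioo (0:ℝ) 1, ((x:ℂ)) ^ ((a:ℂ)-1) * ((1:ℂ)-(x:ℂ)) ^ ((b:ℂ)-1)
        = ∫ x in Set.Ioo (0:ℝ) 1, ((x ^ (a-1) * (1-x) ^ (b-1) : ℝ) : ℂ) := by
          refine setIntegral_congr_fun measurableSet_Ioo (fun x hx => ?_)
          have h1 : ((x:ℂ)) ^ ((a:ℂ)-1) = ((x ^ (a-1) : ℝ) : ℂ) := by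
            rw [show ((a:ℂ)-1) = ((a-1:ℝ):ℂ) by push_cast; ring,
              ← Complex.ofReal_cpow hx.1.le]
          have h2 : ((1:ℂ)-(x:ℂ)) ^ ((b:ℂ)-1) = (((1-x) ^ (b-1) : ℝ) : ℂ) := by
            rw [show ((1:ℂ)-(x:ℂ)) = ((1-x:ℝ):ℂ) by push_cast; ring,
              show ((b:ℂ)-1) = ((b-1:ℝ):ℂ) by push_cast; ring,
              ← Complex.ofReal_cpow (by linarith [hx.2])]
          rw [h1, h2]; push_cast; ring
      _ = ((∫ x in Set.Ioo (0:ℝ) 1, x ^ (a-1) * (1-x) ^ (b-1) : ℝ) : ℂ) := integral_ofReal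
  rw [hβ] at key
  have hΓa : Complex.Gamma (a:ℂ) = ((Real.Gamma a : ℝ) : ℂ) := Complex.Gamma_ofReal a
  have hΓb : Complex.Gamma (b:ℂ) = ((Real.Gamma b : ℝ) : ℂ) := Complex.Gamma_ofReal b
  have hΓab : Complex.Gamma ((a:ℂ)+(b:ℂ)) = ((Real.Gamma (a+b) : ℝ) : ℂ) := by
    rw [show ((a:ℂ)+(b:ℂ)) = ((a+b : ℝ):ℂ) by push_cast; ring, Complex.Gamma_ofReal]
  rw [hΓa, hΓb, hΓab] at key
  have heq : Real.Gamma a * Real.Gamma b =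
      Real.Gamma (a+b) * ∫ x in Set.Ioo (0:ℝ) 1, x ^ (a-1) * (1-x) ^ (b-1) := by
    exact_mod_cast key
  rw [heq]; field_simp

lemma map_image : (fun x : ℝ => x / (1+x)) '' Set.Ioi 0 = Set.Ioo 0 1 := by
  ext u
  constructor
  · rintro ⟨x, hx, rfl⟩
    have hx0 : (0:ℝ) < x := hx
    have h1 : (0:ℝ) < 1 + x := by linarith
    constructor
    · positivity
    · rw [div_lt_one h1]; linarith
  · rintro ⟨h0, h1⟩
    refine ⟨u / (1 - u), by simpa using div_pos h0 (by linarith), ?_⟩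
    have h2 : (1:ℝ) - u ≠ 0 := by linarith
    have h3 : 1 + u/(1-u) = (1-u)⁻¹ := by field_simp; ring
    show (u/(1-u)) / (1 + u/(1-u)) = u
    rw [h3]
    field_simp

lemma deriv_map (x : ℝ) (hx : x ∈ Set.Ioi (0:ℝ)) :
    HasDerivWithinAt (fun x : ℝ => x / (1+x)) ((1+x)^2)⁻¹ (Set.Ioi 0) x := by
  have h1 : (1+x) ≠ 0 := by have : (0:ℝ) < x := hx; positivity
  have := (hasDerivAt_id x).div ((hasDerivAt_const x 1).add (hasDerivAt_id x)) h1
  refine (this.congr_deriv ?_).hasDerivWithinAt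
  simp only [Pi.add_apply, id_eq]
  ring

lemma inj_map : Set.InjOn (fun x : ℝ => x / (1+x)) (Set.Ioi 0) := by
  intro x hx y hy h
  have hx1 : (1:ℝ)+x ≠ 0 := by have : (0:ℝ) < x := hx; positivity
  have hy1 : (1:ℝ)+y ≠ 0 := by have : (0:ℝ) < y := hy; positivity
  field_simp at h
  linarith

lemma beta_Ioi {a b : ℝ} (ha : 0 < a) (hb : 0 < b) :
    ∫ x in Set.Ioi (0:ℝ), x ^ (a-1) * (1+x) ^ (-(a+b)) =
      Real.Gamma a * Real.Gamma b / Real.Gamma (a+b) := by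
  rw [← real_beta_Ioo ha hb, ← map_image,
    integral_image_eq_integral_abs_deriv_smul measurableSet_Ioi deriv_map inj_map]
  refine setIntegral_congr_fun measurableSet_Ioi (fun x hx => ?_)
  have hx0 : (0:ℝ) < x := hx
  have h1 : (0:ℝ) < 1 + x := by linarith
  have h1x : x / (1+x) < 1 := by rw [div_lt_one h1]; linarith
  have hpos : (0:ℝ) < x / (1+x) := by positivity
  have e1 : (x / (1+x)) ^ (a-1) = x ^ (a-1) * (1+x) ^ (-(a-1)) := by
    rw [Real.div_rpow hx0.le h1.le, Real.rpow_neg h1.le, div_eq_mul_inv]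
  have e2 : (1 - x / (1+x)) ^ (b-1) = (1+x) ^ (-(b-1)) := by
    rw [show 1 - x/(1+x) = (1+x)⁻¹ by field_simp; ring, Real.inv_rpow h1.le,
      ← Real.rpow_neg h1.le]
  rw [smul_eq_mul, e1, e2, abs_of_pos (by positivity : (0:ℝ) < ((1+x)^2)⁻¹)]
  rw [show ((1+x)^2)⁻¹ = (1+x) ^ (-2 : ℝ) by
    rw [← Real.rpow_natCast (1+x) 2, ← Real.rpow_neg h1.le]; norm_num]
  rw [show (1+x) ^ (-2:ℝ) * (x ^ (a-1) * (1+x) ^ (-(a-1)) * (1+x) ^ (-(b-1)))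
      = x ^ (a-1) * ((1+x) ^ (-2:ℝ) * (1+x) ^ (-(a-1)) * (1+x) ^ (-(b-1))) from by ring,
    ← Real.rpow_add h1, ← Real.rpow_add h1,
    show (-2 + -(a-1) + -(b-1)) = -(a+b) from by ring]

lemma beta_integrableOn {a b : ℝ} (ha : 0 < a) (hb : 0 < b) :
    IntegrableOn (fun x : ℝ => x ^ (a-1) * (1+x) ^ (-(a+b))) (Set.Ioi 0) := by
  have hmeas : Measurable (fun x : ℝ => x ^ (a-1) * (1+x) ^ (-(a+b))) := by
    fun_prop
  rw [show Set.Ioi (0:ℝ) = Set.Ioc 0 1 ∪ Set.Ioi 1 by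
    rw [Set.Ioc_union_Ioi_eq_Ioi]; norm_num]
  refine IntegrableOn.union ?_ ?_
  · -- on (0,1]
    have hint : IntegrableOn (fun x : ℝ => x ^ (a-1)) (Set.Ioc 0 1) := by
      have := intervalIntegral.intervalIntegrable_rpow' (a := 0) (b := 1) (show (-1:ℝ) < a - 1 by linarith)
      rwa [intervalIntegrable_iff_integrableOn_Ioc_of_le zero_le_one] at this
    refine Integrable.mono' hint hmeas.aestronglyMeasurable ?_
    refine (ae_restrict_iff' measurableSet_Ioc).2 (Eventually.of_forall fun x hx => ?_)
    have hx0 : (0:ℝ) < x := hx.1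
    have h1 : (1:ℝ) ≤ 1 + x := by linarith
    rw [Real.norm_eq_abs, abs_of_nonneg (by positivity)]
    calc x ^ (a-1) * (1+x) ^ (-(a+b)) ≤ x ^ (a-1) * 1 := by
          gcongr
          exact Real.rpow_le_one_of_one_le_of_nonpos h1 (by linarith)
      _ = x ^ (a-1) := mul_one _
  · -- on (1,∞)
    have hint : IntegrableOn (fun x : ℝ => x ^ (-1-b)) (Set.Ioi 1) :=
      integrableOn_Ioi_rpow_of_lt (by linarith) one_pos
    refine Integrable.mono' hint hmeas.aestronglyMeasurable ?_
    refine (ae_restrict_iff' measurableSet_Ioi).2 (Eventually.of_forall fun x hx => ?_)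
    have hx1 : (1:ℝ) < x := hx
    have hx0 : (0:ℝ) < x := by linarith
    rw [Real.norm_eq_abs, abs_of_nonneg (by positivity)]
    calc x ^ (a-1) * (1+x) ^ (-(a+b)) ≤ x ^ (a-1) * x ^ (-(a+b)) := by
          exact mul_le_mul_of_nonneg_left
            (Real.rpow_le_rpow_of_nonpos hx0 (by linarith) (by linarith)) (by positivity)
      _ = x ^ (-1-b) := by rw [← Real.rpow_add hx0]; ring_nf

lemma phi_decomp {α s : ℝ} (hs : 0 < s) :
    s ^ (-α) * (s*(2+s)/(1+s)^2) =
      s ^ ((2-α)-1) * (1+s) ^ (-((2-α)+(α-1))) + s ^ ((2-α)-1) * (1+s) ^ (-((2-α)+α)) := by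
  have h1 : (0:ℝ) < 1 + s := by linarith
  have e0 : s ^ ((2-α)-1 : ℝ) = s ^ (-α) * s := by
    rw [show ((2-α)-1 : ℝ) = -α + 1 by ring, Real.rpow_add_one hs.ne']
  have e1 : (1+s) ^ (-((2-α)+(α-1)) : ℝ) = (1+s)⁻¹ := by
    rw [show (-((2-α)+(α-1)) : ℝ) = -1 by ring, Real.rpow_neg_one]
  have e2 : (1+s) ^ (-((2-α)+α) : ℝ) = ((1+s)^2)⁻¹ := by
    rw [show (-((2-α)+α) : ℝ) = -(2:ℕ) by push_cast; ring, Real.rpow_neg h1.le,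
      Real.rpow_natCast]
  rw [e0, e1, e2]
  field_simp
  ring

lemma phi_integrableOn {α : ℝ} (hα1 : 1 < α) (hα2 : α < 2) :
    IntegrableOn (fun s : ℝ => s ^ (-α) * (s*(2+s)/(1+s)^2)) (Set.Ioi 0) := by
  have h1 : (0:ℝ) < 2 - α := by linarith
  have h2 : (0:ℝ) < α - 1 := by linarith
  have h3 : (0:ℝ) < α := by linarith
  exact IntegrableOn.congr_fun ((beta_integrableOn h1 h2).add (beta_integrableOn h1 h3))
    (fun s hs => (phi_decomp hs).symm) measurableSet_Ioi

lemma sin_shift {α : ℝ} : Real.sin (π * (2 - α)) = - Real.sin (π * α) := by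
  rw [show π * (2 - α) = 2 * π - π * α by ring, Real.sin_sub, Real.sin_two_pi,
    Real.cos_two_pi]
  ring

lemma sin_pi_alpha_neg {α : ℝ} (hα1 : 1 < α) (hα2 : α < 2) : Real.sin (π * α) < 0 := by
  have h : 0 < Real.sin (π * (2 - α)) := by
    apply Real.sin_pos_of_pos_of_lt_pi
    · have := Real.pi_pos; nlinarith
    · have := Real.pi_pos; nlinarith
  rw [sin_shift] at h; linarith

lemma phi_integral_value {α : ℝ} (hα1 : 1 < α) (hα2 : α < 2) :
    ∫ s in Set.Ioi (0:ℝ), s ^ (-α) * (s*(2+s)/(1+s)^2) = -(α * π / Real.sin (π * α)) := by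
  have h1 : (0:ℝ) < 2 - α := by linarith
  have h2 : (0:ℝ) < α - 1 := by linarith
  have h3 : (0:ℝ) < α := by linarith
  have congr1 : ∫ s in Set.Ioi (0:ℝ), s ^ (-α) * (s*(2+s)/(1+s)^2) =
      ∫ s in Set.Ioi (0:ℝ), (s ^ ((2-α)-1) * (1+s) ^ (-((2-α)+(α-1)))
        + s ^ ((2-α)-1) * (1+s) ^ (-((2-α)+α))) :=
    setIntegral_congr_fun measurableSet_Ioi (fun s hs => phi_decomp hs)
  rw [congr1, integral_add (beta_integrableOn h1 h2) (beta_integrableOn h1 h3),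
    beta_Ioi h1 h2, beta_Ioi h1 h3]
  have hg1 : Real.Gamma ((2-α) + (α-1)) = 1 := by norm_num [Real.Gamma_one]
  have hg2 : Real.Gamma ((2-α) + α) = 1 := by
    rw [show (2-α) + α = (1:ℝ)+1 by ring, Real.Gamma_add_one one_ne_zero, Real.Gamma_one]
    norm_num
  have hga : Real.Gamma α = (α-1) * Real.Gamma (α-1) := by
    have h := Real.Gamma_add_one h2.ne'
    rwa [show (α-1)+1 = α by ring] at h
  have hrefl : Real.Gamma (2-α) * Real.Gamma (α-1) = π / Real.sin (π * (2-α)) := by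
    have := Real.Gamma_mul_Gamma_one_sub (2-α)
    rwa [show (1:ℝ) - (2-α) = α - 1 by ring] at this
  rw [hg1, hg2, hga, div_one, div_one]
  have hkey : Real.Gamma (2-α) * Real.Gamma (α-1) = π / (- Real.sin (π * α)) := by
    rw [hrefl, sin_shift]
  calc Real.Gamma (2-α) * Real.Gamma (α-1)
        + Real.Gamma (2-α) * ((α-1) * Real.Gamma (α-1))
      = α * (Real.Gamma (2-α) * Real.Gamma (α-1)) := by ring
    _ = α * (π / (- Real.sin (π * α))) := by rw [hkey]
    _ = -(α * π / Real.sin (π * α)) := by rw [div_neg, mul_neg, mul_div_assoc]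

lemma T_antitone (μ : Measure ℝ) [IsProbabilityMeasure μ] :
    Antitone (fun t : ℝ => (μ (Set.Ioi t)).toReal) := by
  intro s t hst
  exact ENNReal.toReal_mono (measure_ne_top μ _)
    (measure_mono (Set.Ioi_subset_Ioi hst))

lemma T_measurable (μ : Measure ℝ) [IsProbabilityMeasure μ] :
    Measurable (fun t : ℝ => (μ (Set.Ioi t)).toReal) :=
  (T_antitone μ).measurable

lemma ae_nonneg_of_supp (μ : Measure ℝ) (hsupp : μ (Set.Iio 0) = 0) :
    ∀ᵐ x ∂μ, (0:ℝ) ≤ x := by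
  rw [ae_iff]
  convert hsupp using 2
  ext x
  simp [not_le]

lemma gy_cont {y : ℝ} (hy : 0 < y) {x : ℝ} (hx : 0 ≤ x) :
    IntervalIntegrable (fun t : ℝ => t*(2+y*t)/(1+y*t)^2) volume 0 x := by
  apply ContinuousOn.intervalIntegrable
  apply ContinuousOn.div
  · fun_prop
  · fun_prop
  · intro t ht
    rw [Set.uIcc_of_le hx] at ht
    have h1 : (0:ℝ) < 1 + y*t := by nlinarith [ht.1]
    positivity

lemma ftc_gy {y : ℝ} (hy : 0 < y) {x : ℝ} (hx : 0 ≤ x) :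
    ∫ t in (0:ℝ)..x, t*(2+y*t)/(1+y*t)^2 = x^2/(1+y*x) := by
  have key : ∀ t ∈ Set.uIcc (0:ℝ) x,
      HasDerivAt (fun u : ℝ => u^2/(1+y*u)) (t*(2+y*t)/(1+y*t)^2) t := by
    intro t ht
    rw [Set.uIcc_of_le hx] at ht
    have h1 : (0:ℝ) < 1 + y*t := by nlinarith [ht.1]
    have hd := (hasDerivAt_pow 2 t).div
      (((hasDerivAt_id t).const_mul y).const_add 1) h1.ne'
    refine hd.congr_deriv ?_
    simp only [id_eq]
    norm_num
    ring
  rw [intervalIntegral.integral_eq_sub_of_hasDerivAt key (gy_cont hy hx)]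
  norm_num

lemma layercake_Q (μ : Measure ℝ) [IsProbabilityMeasure μ] (hsupp : μ (Set.Iio 0) = 0)
    {y : ℝ} (hy : 0 < y) :
    ∫ x, x^2/(1+y*x) ∂μ
      = ∫ t in Set.Ioi (0:ℝ), (μ (Set.Ioi t)).toReal * (t*(2+y*t)/(1+y*t)^2) := by
  have hae := ae_nonneg_of_supp μ hsupp
  have gnn : ∀ᵐ t ∂(volume.restrict (Set.Ioi (0:ℝ))), 0 ≤ t*(2+y*t)/(1+y*t)^2 := by
    refine (ae_restrict_iff' measurableSet_Ioi).2 (Eventually.of_forall fun t ht => ?_)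
    have ht0 : (0:ℝ) < t := ht
    apply div_nonneg
    · nlinarith [mul_pos hy ht0]
    · positivity
  have key := lintegral_comp_eq_lintegral_meas_lt_mul μ hae aemeasurable_id
    (fun t ht => gy_cont hy ht.le) gnn
  have lhs_congr : ∫⁻ x, ENNReal.ofReal (∫ t in (0:ℝ)..x, t*(2+y*t)/(1+y*t)^2) ∂μ
      = ∫⁻ x, ENNReal.ofReal (x^2/(1+y*x)) ∂μ := by
    refine lintegral_congr_ae ?_
    filter_upwards [hae] with x hx
    rw [ftc_gy hy hx]
  rw [lhs_congr] at key
  have hQmeas : Measurable (fun x : ℝ => x^2/(1+y*x)) := by fun_prop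
  have hQnn : ∀ᵐ x ∂μ, (0:ℝ) ≤ x^2/(1+y*x) := by
    filter_upwards [hae] with x hx
    have h1 : (0:ℝ) < 1 + y*x := by nlinarith
    positivity
  rw [integral_eq_lintegral_of_nonneg_ae hQnn hQmeas.aestronglyMeasurable, key]
  have hTg_meas : Measurable (fun t : ℝ => (μ (Set.Ioi t)).toReal * (t*(2+y*t)/(1+y*t)^2)) := by
    apply (T_measurable μ).mul
    fun_prop
  have hTg_nn : ∀ᵐ t ∂(volume.restrict (Set.Ioi (0:ℝ))),
      0 ≤ (μ (Set.Ioi t)).toReal * (t*(2+y*t)/(1+y*t)^2) := by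
    filter_upwards [gnn] with t ht
    exact mul_nonneg ENNReal.toReal_nonneg ht
  rw [integral_eq_lintegral_of_nonneg_ae hTg_nn hTg_meas.aestronglyMeasurable]
  congr 1
  refine setLIntegral_congr_fun measurableSet_Ioi (fun t ht => ?_)
  have ht0 : (0:ℝ) < t := ht
  have hgnn : (0:ℝ) ≤ t*(2+y*t)/(1+y*t)^2 := by
    apply div_nonneg
    · nlinarith [mul_pos hy ht0]
    · positivity
  rw [show {a : ℝ | t < a} = Set.Ioi t from rfl] at *
  rw [ENNReal.ofReal_mul ENNReal.toReal_nonneg, ENNReal.ofReal_toReal (measure_ne_top μ _)]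

lemma tail_bound (μ : Measure ℝ) [IsProbabilityMeasure μ] {α c : ℝ} (hc : 0 < c)
    (htail : Tendsto (fun t : ℝ => (μ (Set.Ioi t)).toReal / (c * t ^ (-α))) atTop (𝓝 1)) :
    ∃ t₀ : ℝ, 1 ≤ t₀ ∧ ∀ t, t₀ ≤ t → (μ (Set.Ioi t)).toReal ≤ 2*c*t^(-α) := by
  have h2 : ∀ᶠ t in atTop, (μ (Set.Ioi t)).toReal / (c * t ^ (-α)) < 2 :=
    htail.eventually_lt_const (by norm_num)
  obtain ⟨t₁, ht₁⟩ := eventually_atTop.mp h2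
  refine ⟨max t₁ 1, le_max_right _ _, fun t ht => ?_⟩
  have ht1 : (1:ℝ) ≤ t := le_trans (le_max_right _ _) ht
  have ht0 : (0:ℝ) < t := lt_of_lt_of_le one_pos ht1
  have hd : (0:ℝ) < c * t ^ (-α) := mul_pos hc (Real.rpow_pos_of_pos ht0 _)
  have := ht₁ t (le_trans (le_max_left _ _) ht)
  rw [div_lt_iff₀ hd] at this
  nlinarith

lemma integrable_id_of_tail (μ : Measure ℝ) [IsProbabilityMeasure μ]
    (hsupp : μ (Set.Iio 0) = 0) {α c : ℝ} (hα1 : 1 < α) (hc : 0 < c)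
    (htail : Tendsto (fun t : ℝ => (μ (Set.Ioi t)).toReal / (c * t ^ (-α))) atTop (𝓝 1)) :
    Integrable (fun x : ℝ => x) μ := by
  obtain ⟨t₀, ht₀1, ht₀⟩ := tail_bound μ hc htail
  have hae := ae_nonneg_of_supp μ hsupp
  have ht₀0 : (0:ℝ) < t₀ := lt_of_lt_of_le one_pos ht₀1
  refine ⟨measurable_id.aestronglyMeasurable, ?_⟩
  rw [hasFiniteIntegral_iff_norm]
  have hcongr : ∫⁻ x, ENNReal.ofReal ‖x‖ ∂μ = ∫⁻ x, ENNReal.ofReal x ∂μ := by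
    refine lintegral_congr_ae ?_
    filter_upwards [hae] with x hx
    rw [Real.norm_eq_abs, abs_of_nonneg hx]
  rw [hcongr, lintegral_eq_lintegral_meas_lt μ hae aemeasurable_id]
  have hsplit : Set.Ioi (0:ℝ) = Set.Ioc 0 t₀ ∪ Set.Ioi t₀ := by
    rw [Set.Ioc_union_Ioi_eq_Ioi ht₀0.le]
  have hdisj : Disjoint (Set.Ioc (0:ℝ) t₀) (Set.Ioi t₀) := by
    simp [Set.disjoint_left]
  rw [hsplit, lintegral_union measurableSet_Ioi hdisj]
  have hb1 : ∫⁻ t in Set.Ioc (0:ℝ) t₀, μ {a | t < a} ≤ ENNReal.ofReal t₀ := by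
    calc ∫⁻ t in Set.Ioc (0:ℝ) t₀, μ {a | t < a}
        ≤ ∫⁻ _ in Set.Ioc (0:ℝ) t₀, 1 := setLIntegral_mono measurable_const
          (fun t _ => prob_le_one)
      _ = ENNReal.ofReal t₀ := by
          rw [setLIntegral_const, one_mul, Real.volume_Ioc]
          congr 1
          simp
  have hint2 : Integrable (fun t : ℝ => 2*c*t^(-α)) (volume.restrict (Set.Ioi t₀)) :=
    ((integrableOn_Ioi_rpow_of_lt (by linarith) ht₀0).const_mul (2*c))
  have hb2 : ∫⁻ t in Set.Ioi t₀, μ {a | t < a} ≤ ∫⁻ t in Set.Ioi t₀,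
      ENNReal.ofReal (2*c*t^(-α)) := by
    refine setLIntegral_mono (by fun_prop) (fun t ht => ?_)
    have := ht₀ t (le_of_lt ht)
    calc μ {a | t < a} = ENNReal.ofReal ((μ (Set.Ioi t)).toReal) := by
          rw [ENNReal.ofReal_toReal (measure_ne_top μ _)]; rfl
      _ ≤ ENNReal.ofReal (2*c*t^(-α)) := ENNReal.ofReal_le_ofReal this
  have hfin2 : ∫⁻ t in Set.Ioi t₀, ENNReal.ofReal (2*c*t^(-α)) < ⊤ :=
    hint2.lintegral_lt_top
  exact lt_of_le_of_lt (add_le_add hb1 hb2)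
    (ENNReal.add_lt_top.mpr ⟨ENNReal.ofReal_lt_top, hfin2⟩)

set_option linter.unusedSectionVars false
section PerY

variable {μ : Measure ℝ} [IsProbabilityMeasure μ] (hsupp : μ (Set.Iio 0) = 0)
  (hid : Integrable (fun x : ℝ => x) μ) {y : ℝ} (hy : 0 < y)

include hsupp hid hy

lemma int_f1 : Integrable (fun x : ℝ => x/(1+y*x)) μ := by
  refine Integrable.mono' hid.abs ((measurable_id.div (measurable_const.add (measurable_id.const_mul y))).aestronglyMeasurable) ?_
  filter_upwards [ae_nonneg_of_supp μ hsupp] with x hx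
  have h1 : (1:ℝ) ≤ 1 + y*x := by nlinarith
  rw [Real.norm_eq_abs, abs_of_nonneg (div_nonneg hx (by linarith)), abs_of_nonneg hx]
  exact div_le_self hx h1

lemma int_f0 : Integrable (fun x : ℝ => (1+y*x)⁻¹) μ := by
  refine Integrable.mono' (integrable_const 1) (((measurable_const.add (measurable_id.const_mul y)).inv).aestronglyMeasurable) ?_
  filter_upwards [ae_nonneg_of_supp μ hsupp] with x hx
  have h1 : (1:ℝ) ≤ 1 + y*x := by nlinarith
  rw [Real.norm_eq_abs, abs_of_nonneg (by positivity)]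
  exact inv_le_one_of_one_le₀ h1

lemma int_f2 : Integrable (fun x : ℝ => x^2/(1+y*x)) μ := by
  refine Integrable.congr (((hid.sub (int_f1 hsupp hid hy)).const_mul y⁻¹)) ?_
  filter_upwards [ae_nonneg_of_supp μ hsupp] with x hx
  have h1 : (0:ℝ) < 1 + y*x := by nlinarith
  simp only [Pi.sub_apply]
  field_simp
  ring

lemma id_B : ∫ x, (1+y*x)⁻¹ ∂μ = 1 - y * ∫ x, x/(1+y*x) ∂μ := by
  have e1 : ∫ x, (1+y*x)⁻¹ ∂μ = ∫ x, (1 - y * (x/(1+y*x))) ∂μ := by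
    refine integral_congr_ae ?_
    filter_upwards [ae_nonneg_of_supp μ hsupp] with x hx
    have h1 : (0:ℝ) < 1 + y*x := by nlinarith
    field_simp
    ring
  rw [e1, integral_sub (integrable_const 1) ((int_f1 hsupp hid hy).const_mul y),
    integral_const, integral_const_mul]
  simp

lemma id_A : ∫ x, x/(1+y*x) ∂μ = (∫ x, x ∂μ) - y * ∫ x, x^2/(1+y*x) ∂μ := by
  have e1 : ∫ x, x/(1+y*x) ∂μ = ∫ x, (x - y * (x^2/(1+y*x))) ∂μ := by
    refine integral_congr_ae ?_
    filter_upwards [ae_nonneg_of_supp μ hsupp] with x hx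
    have h1 : (0:ℝ) < 1 + y*x := by nlinarith
    field_simp
    ring
  rw [e1, integral_sub hid ((int_f2 hsupp hid hy).const_mul y), integral_const_mul]

lemma A_nonneg : 0 ≤ ∫ x, x/(1+y*x) ∂μ := by
  refine integral_nonneg_of_ae ?_
  filter_upwards [ae_nonneg_of_supp μ hsupp] with x hx
  have h1 : (0:ℝ) < 1 + y*x := by nlinarith
  positivity

lemma A_le_m : ∫ x, x/(1+y*x) ∂μ ≤ ∫ x, x ∂μ := by
  refine integral_mono_ae (int_f1 hsupp hid hy) hid ?_
  filter_upwards [ae_nonneg_of_supp μ hsupp] with x hx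
  have h1 : (1:ℝ) ≤ 1 + y*x := by nlinarith
  exact div_le_self hx h1

end PerY

lemma subst_Q (μ : Measure ℝ) [IsProbabilityMeasure μ] (hsupp : μ (Set.Iio 0) = 0)
    {α y : ℝ} (hy : 0 < y) :
    y^((2:ℝ)-α) * ∫ x, x^2/(1+y*x) ∂μ
      = ∫ s in Set.Ioi (0:ℝ),
          (s*(2+s)/(1+s)^2) * (y^(-α) * (μ (Set.Ioi (y⁻¹*s))).toReal) := by
  rw [layercake_Q μ hsupp hy]
  have hcv := integral_comp_mul_left_Ioi
    (fun t => (μ (Set.Ioi t)).toReal * (t*(2+y*t)/(1+y*t)^2)) 0 (inv_pos.mpr hy)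
  rw [mul_zero, inv_inv, smul_eq_mul] at hcv
  have h2 : ∫ t in Set.Ioi (0:ℝ), (μ (Set.Ioi t)).toReal * (t*(2+y*t)/(1+y*t)^2)
      = y⁻¹ * ∫ s in Set.Ioi (0:ℝ),
          (μ (Set.Ioi (y⁻¹*s))).toReal * ((y⁻¹*s)*(2+y*(y⁻¹*s))/(1+y*(y⁻¹*s))^2) := by
    rw [hcv, ← mul_assoc, inv_mul_cancel₀ hy.ne', one_mul]
  rw [h2, ← mul_assoc, ← integral_const_mul]
  refine setIntegral_congr_fun measurableSet_Ioi (fun s hs => ?_)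
  have hs0 : (0:ℝ) < s := hs
  have hys : y * (y⁻¹ * s) = s := by field_simp
  rw [hys]
  have hpow : y^((2:ℝ)-α) * y⁻¹ * y⁻¹ = y^(-α) := by
    rw [show (y:ℝ)⁻¹ = y^(-1:ℝ) by rw [Real.rpow_neg_one], ← Real.rpow_add hy,
      ← Real.rpow_add hy]
    congr 1
    ring
  rw [← hpow]
  ring

lemma Q_tendsto (μ : Measure ℝ) [IsProbabilityMeasure μ] {α c : ℝ}
    (hα1 : 1 < α) (hα2 : α < 2) (hc : 0 < c)
    (htail : Tendsto (fun t : ℝ => (μ (Set.Ioi t)).toReal / (c * t ^ (-α))) atTop (𝓝 1)) :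
    Tendsto (fun y : ℝ => ∫ s in Set.Ioi (0:ℝ),
        (s*(2+s)/(1+s)^2) * (y^(-α) * (μ (Set.Ioi (y⁻¹*s))).toReal))
      (𝓝[>] 0) (𝓝 (c * -(α * π / Real.sin (π * α)))) := by
  obtain ⟨t₀, ht₀1, ht₀⟩ := tail_bound μ hc htail
  have ht₀0 : (0:ℝ) < t₀ := lt_of_lt_of_le one_pos ht₀1
  have hα0 : (0:ℝ) < α := by linarith
  have hφm : Measurable (fun s : ℝ => s*(2+s)/(1+s)^2) :=
    (measurable_id.mul (measurable_const.add measurable_id)).div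
      ((measurable_const.add measurable_id).pow_const 2)
  have hφint := phi_integrableOn hα1 hα2
  have limit_eq : ∫ s in Set.Ioi (0:ℝ), (s*(2+s)/(1+s)^2) * (c * s^(-α))
      = c * -(α * π / Real.sin (π * α)) := by
    rw [← phi_integral_value hα1 hα2, ← integral_const_mul]
    exact setIntegral_congr_fun measurableSet_Ioi (fun s hs => by ring)
  rw [← limit_eq]
  refine tendsto_integral_filter_of_dominated_convergence
    (fun s => (2*c + t₀^α) * (s^(-α) * (s*(2+s)/(1+s)^2))) ?_ ?_ (hφint.const_mul _) ?_
  · refine Eventually.of_forall (fun y => ?_)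
    exact (hφm.mul ((((T_measurable μ).comp
      (measurable_id.const_mul y⁻¹)).const_mul (y^(-α))))).aestronglyMeasurable
  · filter_upwards [self_mem_nhdsWithin] with y hy
    have hy0 : (0:ℝ) < y := hy
    refine (ae_restrict_iff' measurableSet_Ioi).2 (Eventually.of_forall fun s hs => ?_)
    have hs0 : (0:ℝ) < s := hs
    have hu0 : (0:ℝ) < y⁻¹ * s := by positivity
    have hφnn : (0:ℝ) ≤ s*(2+s)/(1+s)^2 := by
      apply div_nonneg
      · nlinarith
      · positivity
    have hsa : (0:ℝ) ≤ s^(-α) := (Real.rpow_pos_of_pos hs0 _).le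
    have hta : (0:ℝ) ≤ t₀^α := (Real.rpow_pos_of_pos ht₀0 _).le
    have hyα : (0:ℝ) < y^(-α) := Real.rpow_pos_of_pos hy0 _
    have e : y^(-α) * ((y⁻¹*s)^(-α)) = s^(-α) := by
      rw [Real.mul_rpow (inv_nonneg.mpr hy0.le) hs0.le, Real.inv_rpow hy0.le,
        ← mul_assoc, mul_inv_cancel₀ hyα.ne', one_mul]
    have key : y^(-α) * (μ (Set.Ioi (y⁻¹*s))).toReal ≤ (2*c + t₀^α) * s^(-α) := by
      rcases le_or_gt t₀ (y⁻¹*s) with h | h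
      · calc y^(-α) * (μ (Set.Ioi (y⁻¹*s))).toReal
            ≤ y^(-α) * (2*c*(y⁻¹*s)^(-α)) :=
              mul_le_mul_of_nonneg_left (ht₀ _ h) hyα.le
          _ = 2*c * (y^(-α) * (y⁻¹*s)^(-α)) := by ring
          _ = 2*c * s^(-α) := by rw [e]
          _ ≤ (2*c + t₀^α) * s^(-α) := by nlinarith [mul_nonneg hta hsa]
      · have hT1 : (μ (Set.Ioi (y⁻¹*s))).toReal ≤ 1 := by
          rw [show (1:ℝ) = (μ Set.univ).toReal by simp]
          exact ENNReal.toReal_mono (measure_ne_top μ _) (measure_mono (Set.subset_univ _))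
        have hb : y^(-α) ≤ t₀^α * s^(-α) := by
          have hinv : y⁻¹ ≤ t₀ * s⁻¹ := by
            have h' : y⁻¹ * s ≤ t₀ * s⁻¹ * s := by
              rw [show t₀ * s⁻¹ * s = t₀ by field_simp]
              exact h.le
            exact le_of_mul_le_mul_right h' hs0
          calc y^(-α) = (y⁻¹)^α := by
                rw [Real.rpow_neg hy0.le, ← Real.inv_rpow hy0.le]
            _ ≤ (t₀ * s⁻¹)^α :=
                Real.rpow_le_rpow (inv_nonneg.mpr hy0.le) hinv hα0.le
            _ = t₀^α * s^(-α) := by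
                rw [Real.mul_rpow ht₀0.le (inv_nonneg.mpr hs0.le),
                  Real.inv_rpow hs0.le, ← Real.rpow_neg hs0.le]
        calc y^(-α) * (μ (Set.Ioi (y⁻¹*s))).toReal ≤ y^(-α) * 1 :=
              mul_le_mul_of_nonneg_left hT1 hyα.le
          _ = y^(-α) := mul_one _
          _ ≤ t₀^α * s^(-α) := hb
          _ ≤ (2*c + t₀^α) * s^(-α) := by nlinarith [mul_nonneg (mul_nonneg (le_of_lt hc) hsa) (le_of_lt hc)]
    have hnn : (0:ℝ) ≤ (s*(2+s)/(1+s)^2) * (y^(-α) * (μ (Set.Ioi (y⁻¹*s))).toReal) :=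
      mul_nonneg hφnn (mul_nonneg hyα.le ENNReal.toReal_nonneg)
    rw [Real.norm_eq_abs, abs_of_nonneg hnn]
    calc (s*(2+s)/(1+s)^2) * (y^(-α) * (μ (Set.Ioi (y⁻¹*s))).toReal)
        ≤ (s*(2+s)/(1+s)^2) * ((2*c + t₀^α) * s^(-α)) :=
          mul_le_mul_of_nonneg_left key hφnn
      _ = (2*c + t₀^α) * (s^(-α) * (s*(2+s)/(1+s)^2)) := by ring
  · refine (ae_restrict_iff' measurableSet_Ioi).2 (Eventually.of_forall fun s hs => ?_)
    have hs0 : (0:ℝ) < s := hs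
    have hinf : Tendsto (fun y : ℝ => y⁻¹ * s) (𝓝[>] 0) atTop :=
      Tendsto.atTop_mul_const hs0 tendsto_inv_nhdsGT_zero
    have hratio := htail.comp hinf
    have hmul := (tendsto_const_nhds
      (x := (s*(2+s)/(1+s)^2) * (c * s^(-α))) (f := 𝓝[>] (0:ℝ))).mul hratio
    rw [mul_one] at hmul
    refine hmul.congr' ?_
    filter_upwards [self_mem_nhdsWithin] with y hy
    have hy0 : (0:ℝ) < y := hy
    have hu0 : (0:ℝ) < y⁻¹ * s := by positivity
    have huα : (0:ℝ) < (y⁻¹*s)^(-α) := Real.rpow_pos_of_pos hu0 _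
    have hyα : (0:ℝ) < y^(-α) := Real.rpow_pos_of_pos hy0 _
    have e : y^(-α) * ((y⁻¹*s)^(-α)) = s^(-α) := by
      rw [Real.mul_rpow (inv_nonneg.mpr hy0.le) hs0.le, Real.inv_rpow hy0.le,
        ← mul_assoc, mul_inv_cancel₀ hyα.ne', one_mul]
    show (s*(2+s)/(1+s)^2) * (c * s^(-α))
        * ((μ (Set.Ioi (y⁻¹*s))).toReal / (c * (y⁻¹*s)^(-α)))
      = (s*(2+s)/(1+s)^2) * (y^(-α) * (μ (Set.Ioi (y⁻¹*s))).toReal)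
    rw [← e]
    field_simp

lemma rpow_to_zero {p : ℝ} (hp : 0 < p) :
    Tendsto (fun y : ℝ => y ^ p) (𝓝[>] (0:ℝ)) (𝓝 0) := by
  have h := (Real.continuousAt_rpow_const 0 p (Or.inr hp.le)).tendsto
  rw [Real.zero_rpow hp.ne'] at h
  exact h.mono_left nhdsWithin_le_nhds

/-- For a probability measure `μ` on `[0,∞)` with regularly varying tail
`μ((t,∞)) ~ c t^{-α}`, `α ∈ (1,2)`, `c > 0` (so in particular `m₁(μ) < ∞`), the mean
`m₁(μ_y) = (∫ x/(1+yx) dμ)/(∫ 1/(1+yx) dμ)` of the tilted measure satisfies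
`(m₁(μ_y) - m₁(μ))/y^{α-1} → παc/sin(πα)` as `y → 0+`. -/
theorem tilted_mean_heavy_tail
    (μ : Measure ℝ) [IsProbabilityMeasure μ] (hsupp : μ (Set.Iio 0) = 0)
    (α c : ℝ) (hα : α ∈ Set.Ioo (1 : ℝ) 2) (hc : 0 < c)
    (htail : Tendsto (fun t : ℝ => (μ (Set.Ioi t)).toReal / (c * t ^ (-α))) atTop (𝓝 1)) :
    Integrable (fun x : ℝ => x) μ ∧
      Tendsto (fun y : ℝ =>
          (((∫ x, x / (1 + y * x) ∂μ) / (∫ x, (1 + y * x)⁻¹ ∂μ)) - ∫ t, t ∂μ) /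
            y ^ (α - 1))
        (𝓝[>] 0) (𝓝 (π * α * c / Real.sin (π * α))) := by
  obtain ⟨hα1, hα2⟩ := hα
  have hid := integrable_id_of_tail μ hsupp hα1 hc htail
  refine ⟨hid, ?_⟩
  set m := ∫ x, x ∂μ with hm
  have hm0 : 0 ≤ m := integral_nonneg_of_ae (ae_nonneg_of_supp μ hsupp)
  have hQ : Tendsto (fun y : ℝ => y^((2:ℝ)-α) * ∫ x, x^2/(1+y*x) ∂μ) (𝓝[>] 0)
      (𝓝 (c * -(α*π/Real.sin (π*α)))) := by
    refine (Q_tendsto μ hα1 hα2 hc htail).congr' ?_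
    filter_upwards [self_mem_nhdsWithin] with y hy
    exact (subst_Q μ hsupp hy).symm
  have hpow0 : Tendsto (fun y : ℝ => y ^ ((2:ℝ)-α)) (𝓝[>] 0) (𝓝 0) :=
    rpow_to_zero (by linarith)
  have hmA : Tendsto (fun y : ℝ => m * (∫ x, x/(1+y*x) ∂μ) * y^((2:ℝ)-α))
      (𝓝[>] 0) (𝓝 0) := by
    refine squeeze_zero' ?_ ?_ (by simpa using hpow0.const_mul (m*m))
    · filter_upwards [self_mem_nhdsWithin] with y hy
      exact mul_nonneg (mul_nonneg hm0 (A_nonneg hsupp hid hy))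
        (Real.rpow_nonneg (le_of_lt hy) _)
    · filter_upwards [self_mem_nhdsWithin] with y hy
      exact mul_le_mul_of_nonneg_right
        (mul_le_mul_of_nonneg_left (A_le_m hsupp hid hy) hm0)
        (Real.rpow_nonneg (le_of_lt hy) _)
  have hyA : Tendsto (fun y : ℝ => y * ∫ x, x/(1+y*x) ∂μ) (𝓝[>] 0) (𝓝 0) := by
    have hg : Tendsto (fun y : ℝ => y * m) (𝓝[>] (0:ℝ)) (𝓝 0) := by
      have := ((continuous_id.mul (continuous_const (y := m))).tendsto 0).mono_left
        (nhdsWithin_le_nhds (s := Set.Ioi (0:ℝ)))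
      simpa only [Pi.mul_def, id_eq, zero_mul] using this
    refine squeeze_zero' ?_ ?_ hg
    · filter_upwards [self_mem_nhdsWithin] with y hy
      exact mul_nonneg (le_of_lt hy) (A_nonneg hsupp hid hy)
    · filter_upwards [self_mem_nhdsWithin] with y hy
      exact mul_le_mul_of_nonneg_left (A_le_m hsupp hid hy) (le_of_lt hy)
  have hB : Tendsto (fun y : ℝ => ∫ x, (1+y*x)⁻¹ ∂μ) (𝓝[>] 0) (𝓝 1) := by
    have h1 : Tendsto (fun y : ℝ => 1 - y * ∫ x, x/(1+y*x) ∂μ) (𝓝[>] 0) (𝓝 1) := by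
      simpa using (tendsto_const_nhds (x := (1:ℝ)) (f := 𝓝[>] (0:ℝ))).sub hyA
    refine h1.congr' ?_
    filter_upwards [self_mem_nhdsWithin] with y hy
    exact (id_B hsupp hid hy).symm
  have hnum : Tendsto (fun y : ℝ => m * (∫ x, x/(1+y*x) ∂μ) * y^((2:ℝ)-α)
      - y^((2:ℝ)-α) * ∫ x, x^2/(1+y*x) ∂μ) (𝓝[>] 0)
      (𝓝 (0 - c * -(α*π/Real.sin (π*α)))) := hmA.sub hQ
  have hdiv := hnum.div hB one_ne_zero
  have hval : (0 - c * -(α*π/Real.sin (π*α)))/1 = π*α*c/Real.sin (π*α) := by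
    rw [div_one]
    ring
  rw [hval] at hdiv
  refine Tendsto.congr' ?_ hdiv
  have hmem : Set.Ioo (0:ℝ) (1/(m+1)) ∈ 𝓝[>] (0:ℝ) :=
    Ioo_mem_nhdsGT_of_mem ⟨le_refl 0, by positivity⟩
  filter_upwards [hmem] with y hy
  obtain ⟨hy0, hylt⟩ := hy
  have hBA : (∫ x, (1+y*x)⁻¹ ∂μ) = 1 - y * ∫ x, x/(1+y*x) ∂μ := id_B hsupp hid hy0
  have hAQ : (∫ x, x/(1+y*x) ∂μ) = m - y * ∫ x, x^2/(1+y*x) ∂μ := id_A hsupp hid hy0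
  have hA0 : 0 ≤ ∫ x, x/(1+y*x) ∂μ := A_nonneg hsupp hid hy0
  have hAm : (∫ x, x/(1+y*x) ∂μ) ≤ m := A_le_m hsupp hid hy0
  have hym1 : y * (m+1) < 1 := by
    rw [lt_div_iff₀ (by positivity)] at hylt
    linarith
  have hBpos : 0 < ∫ x, (1+y*x)⁻¹ ∂μ := by
    rw [hBA]
    have h2 : y * (∫ x, x/(1+y*x) ∂μ) ≤ y * m := mul_le_mul_of_nonneg_left hAm hy0.le
    nlinarith
  have hpow_pos : 0 < y^(α-1) := Real.rpow_pos_of_pos hy0 _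
  have hsplit : y^((2:ℝ)-α) = y * (y^(α-1))⁻¹ := by
    rw [show ((2:ℝ)-α) = 1 + -(α-1) by ring, Real.rpow_add hy0, Real.rpow_one,
      Real.rpow_neg hy0.le]
  have hkey : (∫ x, x/(1+y*x) ∂μ) - m * ∫ x, (1+y*x)⁻¹ ∂μ
      = y * (m * (∫ x, x/(1+y*x) ∂μ) - ∫ x, x^2/(1+y*x) ∂μ) := by
    rw [hBA]
    linear_combination hAQ
  simp only [Pi.div_apply]
  set A := ∫ x, x/(1+y*x) ∂μ with hAdef
  set B := ∫ x, (1+y*x)⁻¹ ∂μ with hBdef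
  set Q := ∫ x, x^2/(1+y*x) ∂μ with hQdef
  clear_value A B Q
  have e1 : A/B - m = (A - m*B)/B := by
    rw [sub_div, mul_div_cancel_right₀ m hBpos.ne']
  rw [e1, hkey, div_div, show B * y^(α-1) = y^(α-1) * B by ring, ← div_div, hsplit]
  congr 1
  rw [eq_div_iff hpow_pos.ne']
  field_simp
end
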